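/- arXiv:2111.09671 — 6 statements merged into one kernel-verified Lean document; each statement's English description precedes it below -/
import Mathlib

section
/- Let n, r, d be positive integers and let F be a family of subsets of [n] that does not have property U(r+1, d) and such that the sum Σ_{A ∈ F} |A| is minimized among all families of subsets of [n] of cardinality |F| not having property U(r+1, d). Then F is downward closed, i.e., if B ∈ F and C ⊆ B then C ∈ F. -/
/-- `F` shatters `I` : the trace of `F` on `I` has full size `2^|I|`. -/
def Shatters {n : ℕ} (F : Finset (Finset (Fin n))) (I : Finset (Fin n)) : Prop :=
  (F.image fun A => A ∩ I).card = 2 ^ I.card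

/-- `I` is `d`-universal for `F`. -/
def DUniversal {n : ℕ} (F : Finset (Finset (Fin n))) (d : ℕ) (I : Finset (Fin n)) : Prop :=
  d ≤ I.card ∧ ∀ J ⊆ I, J.card = d → Shatters F J

/-- `F` has property `U(r, d)` : there is a `d`-universal set of size `r`. -/
def HasU {n : ℕ} (F : Finset (Finset (Fin n))) (r d : ℕ) : Prop :=
  ∃ I : Finset (Fin n), I.card = r ∧ DUniversal F d I

open Finset
open scoped FinsetFamily

lemma shatters_iff {n : ℕ} (F : Finset (Finset (Fin n))) (I : Finset (Fin n)) :
    _root_.Shatters F I ↔ Finset.Shatters F I := by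
  have hsub : (F.image fun A => A ∩ I) ⊆ I.powerset := by
    intro t ht
    simp only [mem_image] at ht
    obtain ⟨A, _, rfl⟩ := ht
    exact mem_powerset.2 inter_subset_right
  constructor
  · intro h t ht
    have : (F.image fun A => A ∩ I) = I.powerset :=
      eq_of_subset_of_card_le hsub (by rw [card_powerset, h])
    have ht' : t ∈ F.image fun A => A ∩ I := this ▸ mem_powerset.2 ht
    simp only [mem_image] at ht'
    obtain ⟨A, hA, hAt⟩ := ht'
    exact ⟨A, hA, by rw [inter_comm]; exact hAt⟩
  · intro h
    have : I.powerset ⊆ F.image fun A => A ∩ I := by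
      intro t ht
      obtain ⟨A, hA, hAt⟩ := h (mem_powerset.1 ht)
      exact mem_image.2 ⟨A, hA, by rw [inter_comm]; exact hAt⟩
    rw [_root_.Shatters, Subset.antisymm hsub this, card_powerset]


lemma hasU_of_compression {n r d : ℕ} {F : Finset (Finset (Fin n))} {a : Fin n}
    (h : HasU (𝓓 a F) r d) : HasU F r d := by
  obtain ⟨I, hI, hle, hJ⟩ := h
  exact ⟨I, hI, hle, fun J hJI hJd => (shatters_iff F J).2
    (Finset.Shatters.of_compression ((shatters_iff (𝓓 a F) J).1 (hJ J hJI hJd)))⟩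

lemma compression_eq_image {α : Type*} [DecidableEq α] (a : α) (𝒜 : Finset (Finset α)) :
    𝓓 a 𝒜 = 𝒜.image fun s => if s.erase a ∈ 𝒜 then s else s.erase a := by
  apply (eq_of_subset_of_card_le ?_ ?_).symm
  · intro t ht
    simp only [mem_image] at ht
    obtain ⟨s, hs, rfl⟩ := ht
    split_ifs with h
    · exact Down.mem_compression.2 (Or.inl ⟨hs, h⟩)
    · exact Down.erase_mem_compression hs
  · rw [Down.card_compression, card_image_of_injOn]
    intro s hs t ht hst
    simp only at hst
    split_ifs at hst with h1 h2 h2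
    · exact hst
    · exact absurd (hst ▸ hs) h2
    · exact absurd (hst ▸ ht) h1
    · have has : a ∈ s := by
        by_contra hx; rw [erase_eq_of_notMem hx] at h1; exact h1 hs
      have hat : a ∈ t := by
        by_contra hx; rw [erase_eq_of_notMem hx] at h2; exact h2 ht
      rw [← insert_erase has, ← insert_erase hat, hst]

theorem stmt_0 {n r d : ℕ} (hn : 0 < n) (hr : 0 < r) (hd : 0 < d)
    (F : Finset (Finset (Fin n))) (hF : ¬ HasU F (r + 1) d)
    (hmin : ∀ G : Finset (Finset (Fin n)),
      ¬ HasU G (r + 1) d → G.card = F.card →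
      ∑ A ∈ F, A.card ≤ ∑ A ∈ G, A.card) :
    ∀ B ∈ F, ∀ C ⊆ B, C ∈ F := by
  -- Step 1 : F is closed under erasing one element.
  have herase : ∀ A ∈ F, ∀ x : Fin n, A.erase x ∈ F := by
    intro A hA x
    by_contra hAx
    have hxA : x ∈ A := by
      by_contra hx; rw [erase_eq_of_notMem hx] at hAx; exact hAx hA
    set G := 𝓓 x F with hG
    have hGU : ¬ HasU G (r + 1) d := fun h => hF (hasU_of_compression h)
    have hGcard : G.card = F.card := Down.card_compression x F
    have hsum := hmin G hGU hGcard
    have hlt : ∑ B ∈ G, B.card < ∑ B ∈ F, B.card := by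
      rw [hG, compression_eq_image, sum_image]
      · apply sum_lt_sum
        · intro i hi
          split_ifs with h
          · exact le_rfl
          · exact card_le_card (erase_subset _ _)
        · refine ⟨A, hA, ?_⟩
          rw [if_neg hAx]
          exact card_lt_card (erase_ssubset hxA)
      · intro s hs t ht hst
        simp only at hst
        split_ifs at hst with h1 h2 h2
        · exact hst
        · exact absurd (hst ▸ hs) h2
        · exact absurd (hst ▸ ht) h1
        · have has : x ∈ s := by
            by_contra hy; rw [erase_eq_of_notMem hy] at h1; exact h1 hs
          have hat : x ∈ t := by
            by_contra hy; rw [erase_eq_of_notMem hy] at h2; exact h2 ht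
          rw [← insert_erase has, ← insert_erase hat, hst]
    exact absurd hsum (not_le.2 hlt)
  -- Step 2 : downward closure by induction.
  have key : ∀ k : ℕ, ∀ B ∈ F, ∀ C ⊆ B, B.card ≤ C.card + k → C ∈ F := by
    intro k
    induction k with
    | zero =>
      intro B hB C hCB hcard
      rw [show C = B from eq_of_subset_of_card_le hCB (by omega)]
      exact hB
    | succ k ih =>
      intro B hB C hCB hcard
      by_cases hCeq : C = B
      · rwa [hCeq]
      · obtain ⟨x, hxB, hxC⟩ := exists_of_ssubset (ssubset_of_subset_of_ne hCB hCeq)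
        refine ih (B.erase x) (herase B hB x) C (subset_erase.2 ⟨hCB, hxC⟩) ?_
        rw [card_erase_of_mem hxB]
        omega
  intro B hB C hCB
  exact key B.card B hB C hCB (by omega)
end

section
/- For all integers n ≥ r ≥ d ≥ 1, u(n, r, d) = k(n, r, d); that is, the maximum cardinality of a family of subsets of [n] not having property U(r+1, d) equals the maximum total number of cliques in an n-vertex d-uniform hypergraph containing no clique of size r+1. -/
/-- `u n r d` : the maximum cardinality of a family of subsets of `[n]`
not having property `U(r+1, d)`. -/
noncomputable def uMax (n r d : ℕ) : ℕ :=
  sSup {m | ∃ F : Finset (Finset (Fin n)), ¬ HasU F (r + 1) d ∧ F.card = m}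

/-- `S` is a clique of the `d`-uniform hypergraph with edge set `E` :
every `d`-element subset of `S` is an edge. -/
def IsClique {n : ℕ} (E : Finset (Finset (Fin n))) (d : ℕ) (S : Finset (Fin n)) : Prop :=
  ∀ T ⊆ S, T.card = d → T ∈ E

/-- The total number of cliques of the `d`-graph with edge set `E`. -/
noncomputable def numCliques {n : ℕ} (E : Finset (Finset (Fin n))) (d : ℕ) : ℕ :=
  {S : Finset (Fin n) | IsClique E d S}.ncard

/-- `k n r d` : the maximum total number of cliques in an `n`-vertex `d`-uniform
hypergraph with no clique of size `r+1`. -/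
noncomputable def kMax (n r d : ℕ) : ℕ :=
  sSup {m | ∃ E : Finset (Finset (Fin n)),
    (∀ e ∈ E, e.card = d) ∧
    (¬ ∃ S : Finset (Fin n), S.card = r + 1 ∧ IsClique E d S) ∧
    numCliques E d = m}

open Finset

lemma shatters_iff_s1 {n : ℕ} {F : Finset (Finset (Fin n))} {J : Finset (Fin n)} :
    _root_.Shatters F J ↔ ∀ B ⊆ J, ∃ A ∈ F, A ∩ J = B := by
  have hsub : (F.image fun A => A ∩ J) ⊆ J.powerset := by
    intro x hx
    simp only [mem_image] at hx
    obtain ⟨A, _, rfl⟩ := hx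
    exact mem_powerset.2 inter_subset_right
  constructor
  · intro h B hB
    have heq : (F.image fun A => A ∩ J) = J.powerset :=
      Finset.eq_of_subset_of_card_le hsub (by rw [card_powerset, h])
    have : B ∈ F.image fun A => A ∩ J := by rw [heq]; exact mem_powerset.2 hB
    simpa using this
  · intro h
    have hsub2 : J.powerset ⊆ (F.image fun A => A ∩ J) := by
      intro B hB
      obtain ⟨A, hA, hAJ⟩ := h B (mem_powerset.1 hB)
      exact mem_image.2 ⟨A, hA, hAJ⟩
    rw [_root_.Shatters, Subset.antisymm hsub hsub2, card_powerset]

def comp {n : ℕ} (i : Fin n) (F : Finset (Finset (Fin n))) : Finset (Finset (Fin n)) :=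
  F.image fun A => if A.erase i ∈ F then A else A.erase i

lemma comp_card {n : ℕ} (i : Fin n) (F : Finset (Finset (Fin n))) :
    (comp i F).card = F.card := by
  apply Finset.card_image_of_injOn
  intro A hA B hB hke
  by_cases hA' : A.erase i ∈ F <;> by_cases hB' : B.erase i ∈ F <;>
    simp only [if_pos, if_neg, hA', hB', if_true, if_false] at hke
  · exact hke
  · exact absurd (hke ▸ hA : B.erase i ∈ F) hB'
  · exact absurd (hke ▸ hB : A.erase i ∈ F) hA'
  · have hiA : i ∈ A := by
      by_contra h; rw [Finset.erase_eq_of_notMem h] at hA'; exact hA' hA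
    have hiB : i ∈ B := by
      by_contra h; rw [Finset.erase_eq_of_notMem h] at hB'; exact hB' hB
    rw [← Finset.insert_erase hiA, ← Finset.insert_erase hiB, hke]

lemma shatters_of_comp {n : ℕ} {i : Fin n} {F : Finset (Finset (Fin n))}
    {J : Finset (Fin n)} (h : _root_.Shatters (comp i F) J) : _root_.Shatters F J := by
  rw [shatters_iff_s1] at h ⊢
  intro B hB
  obtain ⟨A', hA', hA'J⟩ := h B hB
  simp only [comp, mem_image] at hA'
  obtain ⟨A, hA, hf⟩ := hA'
  by_cases hE : A.erase i ∈ F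
  · rw [if_pos hE] at hf; exact ⟨A, hA, hf ▸ hA'J⟩
  · rw [if_neg hE] at hf
    subst hf
    by_cases hiJ : i ∈ J
    · have hiB : i ∉ B := by
        intro hiB
        have : i ∈ A.erase i ∩ J := hA'J ▸ hiB
        exact (Finset.notMem_erase i A) (Finset.mem_inter.1 this).1
      obtain ⟨C', hC', hC'J⟩ := h (insert i B) (Finset.insert_subset hiJ hB)
      have hiC' : i ∈ C' := by
        have : i ∈ C' ∩ J := hC'J ▸ Finset.mem_insert_self i B
        exact (Finset.mem_inter.1 this).1
      simp only [comp, mem_image] at hC'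
      obtain ⟨C, hC, hfC⟩ := hC'
      by_cases hEC : C.erase i ∈ F
      · rw [if_pos hEC] at hfC
        subst hfC
        refine ⟨C.erase i, hEC, ?_⟩
        have : C.erase i ∩ J = (C ∩ J).erase i := by
          ext x; simp only [mem_inter, mem_erase]; tauto
        rw [this, hC'J, Finset.erase_insert hiB]
      · rw [if_neg hEC] at hfC
        subst hfC
        exact absurd hiC' (Finset.notMem_erase i C)
    · refine ⟨A, hA, ?_⟩
      rw [← hA'J]
      ext x; simp only [mem_inter, mem_erase]
      constructor
      · rintro ⟨hx, hxJ⟩; exact ⟨⟨fun he => hiJ (he ▸ hxJ), hx⟩, hxJ⟩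
      · rintro ⟨⟨_, hx⟩, hxJ⟩; exact ⟨hx, hxJ⟩

lemma hasU_of_comp {n : ℕ} {i : Fin n} {F : Finset (Finset (Fin n))} {r d : ℕ}
    (h : HasU (comp i F) r d) : HasU F r d := by
  obtain ⟨I, hI, hle, hsh⟩ := h
  exact ⟨I, hI, hle, fun J hJ hJd => shatters_of_comp (hsh J hJ hJd)⟩

lemma exists_ideal {n : ℕ} (r d : ℕ) (F : Finset (Finset (Fin n))) (hF : ¬ HasU F r d) :
    ∃ G : Finset (Finset (Fin n)), (∀ A ∈ G, ∀ i, A.erase i ∈ G) ∧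
      ¬ HasU G r d ∧ G.card = F.card := by
  generalize hm : (∑ A ∈ F, A.card) = m
  induction m using Nat.strong_induction_on generalizing F with
  | _ m ih =>
    by_cases hdc : ∀ A ∈ F, ∀ i, A.erase i ∈ F
    · exact ⟨F, hdc, hF, rfl⟩
    · push_neg at hdc
      obtain ⟨A, hA, i, hAi⟩ := hdc
      have hiA : i ∈ A := by
        by_contra h
        rw [Finset.erase_eq_of_notMem h] at hAi
        exact hAi hA
      have hinj : Set.InjOn (fun A : Finset (Fin n) => if A.erase i ∈ F then A else A.erase i) F := by
        have := comp_card i F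
        rw [comp] at this
        exact Finset.injOn_of_card_image_eq (by rw [this])
      have hsum : ∑ B ∈ comp i F, B.card < m := by
        rw [comp, Finset.sum_image fun x hx y hy => hinj hx hy]
        rw [← hm]
        apply Finset.sum_lt_sum
        · intro x hx
          split
          · exact le_rfl
          · exact Finset.card_le_card (Finset.erase_subset i x)
        · refine ⟨A, hA, ?_⟩
          rw [if_neg hAi]
          exact Finset.card_lt_card (Finset.erase_ssubset hiA)
      obtain ⟨G, h1, h2, h3⟩ := ih _ hsum (comp i F) (fun h => hF (hasU_of_comp h)) rfl
      exact ⟨G, h1, h2, h3.trans (comp_card i F)⟩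

lemma down_closed {n : ℕ} {G : Finset (Finset (Fin n))}
    (hG : ∀ A ∈ G, ∀ i, A.erase i ∈ G) :
    ∀ m (A B : Finset (Fin n)), (A \ B).card = m → A ∈ G → B ⊆ A → B ∈ G := by
  intro m
  induction m with
  | zero =>
    intro A B h hA hBA
    have : A ⊆ B := by
      rwa [Finset.card_eq_zero, Finset.sdiff_eq_empty_iff_subset] at h
    rw [Finset.Subset.antisymm hBA this]; exact hA
  | succ k ih =>
    intro A B h hA hBA
    have : (A \ B).Nonempty := by
      rw [← Finset.card_pos, h]; omega
    obtain ⟨i, hi⟩ := this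
    obtain ⟨hiA, hiB⟩ := Finset.mem_sdiff.1 hi
    refine ih (A.erase i) B ?_ (hG A hA i) (Finset.subset_erase.2 ⟨hBA, hiB⟩)
    have : A.erase i \ B = (A \ B).erase i := by
      ext x; simp only [Finset.mem_sdiff, Finset.mem_erase]; tauto
    rw [this, Finset.card_erase_of_mem hi, h]
    omega

lemma bdd_u (n r d : ℕ) :
    BddAbove {m | ∃ F : Finset (Finset (Fin n)), ¬ HasU F (r + 1) d ∧ F.card = m} := by
  refine ⟨Fintype.card (Finset (Fin n)), ?_⟩
  rintro m ⟨F, _, rfl⟩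
  exact Finset.card_le_univ F

lemma bdd_k (n r d : ℕ) :
    BddAbove {m | ∃ E : Finset (Finset (Fin n)),
      (∀ e ∈ E, e.card = d) ∧
      (¬ ∃ S : Finset (Fin n), S.card = r + 1 ∧ IsClique E d S) ∧
      numCliques E d = m} := by
  refine ⟨Fintype.card (Finset (Fin n)), ?_⟩
  rintro m ⟨E, _, _, rfl⟩
  calc numCliques E d ≤ (Set.univ : Set (Finset (Fin n))).ncard :=
        Set.ncard_le_ncard (Set.subset_univ _) (Set.toFinite _)
    _ = Fintype.card (Finset (Fin n)) := by rw [Set.ncard_univ, Nat.card_eq_fintype_card]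

-- u ≤ k direction: every admissible family yields an admissible hypergraph
lemma u_le_k (n r d : ℕ) (hd : 1 ≤ d) (hdr : d ≤ r) : uMax n r d ≤ kMax n r d := by
  classical
  apply csSup_le
  · exact ⟨0, ∅, by
      rintro ⟨I, hI, hle, hsh⟩
      have hdI : d ≤ I.card := by omega
      obtain ⟨J, hJI, hJd⟩ := Finset.exists_subset_card_eq hdI
      have := hsh J hJI hJd
      rw [_root_.Shatters] at this
      simp only [Finset.image_empty, Finset.card_empty] at this
      exact absurd this.symm (by positivity), rfl⟩
  · rintro m ⟨F, hF, rfl⟩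
    obtain ⟨G, hGdown, hGnot, hGcard⟩ := exists_ideal (r + 1) d F hF
    have hmem : ∀ {A B : Finset (Fin n)}, A ∈ G → B ⊆ A → B ∈ G :=
      fun hA hBA => down_closed hGdown _ _ _ rfl hA hBA
    set E : Finset (Finset (Fin n)) := G.filter (fun e => e.card = d) with hEdef
    have hE1 : ∀ e ∈ E, e.card = d := fun e he => (Finset.mem_filter.1 he).2
    have hE2 : ¬ ∃ S : Finset (Fin n), S.card = r + 1 ∧ IsClique E d S := by
      rintro ⟨S, hS, hcl⟩
      apply hGnot
      refine ⟨S, hS, by omega, fun J hJS hJd => ?_⟩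
      rw [_root_.shatters_iff_s1]
      intro B hB
      have hJG : J ∈ G := (Finset.mem_filter.1 (hcl J hJS hJd)).1
      exact ⟨B, hmem hJG hB, Finset.inter_eq_left.2 hB⟩
    have hge : G.card ≤ numCliques E d := by
      have hsub : (↑G : Set (Finset (Fin n))) ⊆ {S | IsClique E d S} := by
        intro A hA T hTA hTd
        exact Finset.mem_filter.2 ⟨hmem hA hTA, hTd⟩
      calc G.card = (↑G : Set (Finset (Fin n))).ncard := (Set.ncard_coe_finset G).symm
        _ ≤ numCliques E d := Set.ncard_le_ncard hsub (Set.toFinite _)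
    calc F.card = G.card := hGcard.symm
      _ ≤ numCliques E d := hge
      _ ≤ kMax n r d := le_csSup (bdd_k n r d) ⟨E, hE1, hE2, rfl⟩

lemma k_le_u (n r d : ℕ) (hd : 1 ≤ d) (hdr : d ≤ r) : kMax n r d ≤ uMax n r d := by
  classical
  apply csSup_le
  · refine ⟨numCliques (∅ : Finset (Finset (Fin n))) d, ∅, by simp, ?_, rfl⟩
    rintro ⟨S, hS, hcl⟩
    have : d ≤ S.card := by omega
    obtain ⟨J, hJS, hJd⟩ := Finset.exists_subset_card_eq this
    exact absurd (hcl J hJS hJd) (Finset.notMem_empty J)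
  · rintro m ⟨E, hE1, hE2, rfl⟩
    set F : Finset (Finset (Fin n)) := Finset.univ.filter (fun S => IsClique E d S) with hFdef
    have hcard : F.card = numCliques E d := by
      rw [numCliques]
      have : {S : Finset (Fin n) | IsClique E d S} = ↑F := by
        ext S; simp [hFdef]
      rw [this, Set.ncard_coe_finset]
    have hFnot : ¬ HasU F (r + 1) d := by
      rintro ⟨I, hI, hle, hsh⟩
      apply hE2
      refine ⟨I, hI, fun T hTI hTd => ?_⟩
      have hshT := hsh T hTI hTd
      rw [_root_.shatters_iff_s1] at hshT
      obtain ⟨A, hA, hAT⟩ := hshT T Finset.Subset.rfl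
      have hTA : T ⊆ A := by rw [← hAT]; exact Finset.inter_subset_left
      exact (Finset.mem_filter.1 hA).2 T hTA hTd
    rw [← hcard]
    exact le_csSup (bdd_u n r d) ⟨F, hFnot, rfl⟩

theorem stmt_1 (n r d : ℕ) (hd : 1 ≤ d) (hdr : d ≤ r) (hrn : r ≤ n) :
    uMax n r d = kMax n r d :=
  le_antisymm (u_le_k n r d hd hdr) (k_le_u n r d hd hdr)
end

section
/- For all integers n ≥ r ≥ 2, every family F of subsets of [n] that does not have property U(r+1, 2) satisfies |F| ≤ (n/r + 1)^r (where the right-hand side is a real power). Consequently, every family F of subsets of [n] satisfies |F| ≤ (n/un_2(F) + 1)^{un_2(F)}, where un_2(F) is the size of the largest 2-universal set for F. -/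
/-!
Let `G` be the graph on `[n]` whose edges are the pairs shattered by `F`. Every set shattered by
`F` is a clique of `G`, and `F` shatters at least `|F|` sets (Pajor), so `|F|` is at most the number
of cliques of `G`. If `F` fails `U(r + 1, 2)`, then `G` has no clique on `r + 1` vertices, so some
vertex misses at least `⌈n / r⌉` vertices. Splitting the cliques according to whether they contain
it shows by induction that `G` has at most `∏ (nᵢ + 1)` cliques, where `n₁, …, n_r` is the balanced
partition of `n`, and AM-GM bounds this by `(n / r + 1) ^ r`. The second claim is the first one
with `r = un₂(F)`, the maximality of which rules out `U(r + 1, 2)`.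
-/

open Finset

-- The numbers `(n + i) / r`, `i < r`, are the part sizes of the balanced partition of `n` into `r`
-- parts, so `turanProd n r` is the number of cliques of the Turán graph `T(n, r)`.
def turanProd (n r : ℕ) : ℕ := ∏ i ∈ range r, ((n + i) / r + 1)

lemma turanProd_zero_left (r : ℕ) : turanProd 0 r = 1 :=
  prod_eq_one fun i hi => by simp [Nat.div_eq_of_lt (mem_range.mp hi)]

lemma turanProd_mono_left (r : ℕ) {n n' : ℕ} (h : n ≤ n') : turanProd n r ≤ turanProd n' r :=
  prod_le_prod' fun i _ => by gcongr

lemma sum_range_add_div (n : ℕ) {r : ℕ} (hr : 0 < r) : ∑ i ∈ range r, (n + i) / r = n := by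
  induction n with
  | zero => exact sum_eq_zero fun i hi => by rw [zero_add, Nat.div_eq_of_lt (mem_range.mp hi)]
  | succ n ih =>
    have h := sum_range_succ' (fun i => (n + i) / r) r
    rw [sum_range_succ, ih, Nat.add_div_right n hr] at h
    simp only [add_zero, ← add_assoc] at h
    simp only [add_right_comm n 1]
    omega

lemma add_div_succ_eq_sub_div (k : ℕ) {t i : ℕ} (hi : i < t) :
    (k + 1 + i) / (t + 1) = (k - k / (t + 1) + i) / t := by
  obtain ⟨q, s, hs, rfl⟩ : ∃ q s, s < t + 1 ∧ k = (t + 1) * q + s :=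
    ⟨k / (t + 1), k % (t + 1), Nat.mod_lt _ t.succ_pos, (Nat.div_add_mod k (t + 1)).symm⟩
  have hq : ((t + 1) * q + s) / (t + 1) = q := by
    rw [Nat.mul_add_div t.succ_pos, Nat.div_eq_of_lt hs, add_zero]
  rw [hq, show (t + 1) * q + s + 1 + i = (t + 1) * q + (s + 1 + i) by ring,
    show (t + 1) * q + s - q + i = t * q + (s + i) by rw [add_mul]; omega,
    Nat.mul_add_div t.succ_pos, Nat.mul_add_div (by omega)]
  rcases lt_or_ge (s + i) t with h | h
  · rw [Nat.div_eq_of_lt h, Nat.div_eq_of_lt (by omega)]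
  · rw [Nat.div_eq_of_lt_le (k := 1) (by omega) (by omega),
      Nat.div_eq_of_lt_le (k := 1) (by omega) (by omega)]

lemma turanProd_succ_succ (k t : ℕ) :
    turanProd (k + 1) (t + 1) = turanProd k (t + 1) + turanProd (k - k / (t + 1)) t := by
  have hlast : (k + 1 + t) / (t + 1) = k / (t + 1) + 1 := by
    rw [add_assoc, add_comm 1 t, Nat.add_div_right _ t.succ_pos]
  have hrest : ∏ i ∈ range t, ((k + (i + 1)) / (t + 1) + 1) = turanProd (k - k / (t + 1)) t :=
    prod_congr rfl fun i hi => by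
      rw [← add_assoc, add_right_comm, add_div_succ_eq_sub_div k (mem_range.mp hi)]
  rw [turanProd, turanProd, prod_range_succ, prod_range_succ', ← hrest, hlast]
  simp only [add_zero, ← add_assoc, add_right_comm k 1]
  ring

lemma prod_le_sum_div_card_pow {ι : Type*} (s : Finset ι) (z : ι → ℝ)
    (hz : ∀ i ∈ s, 0 ≤ z i) : ∏ i ∈ s, z i ≤ ((∑ i ∈ s, z i) / #s) ^ #s := by
  rcases s.eq_empty_or_nonempty with rfl | hs
  · simp
  have hcard : (0 : ℝ) < #s := by exact_mod_cast hs.card_pos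
  have amgm := Real.geom_mean_le_arith_mean_weighted s (fun _ => (#s : ℝ)⁻¹) z
    (fun _ _ => by positivity) (by rw [sum_const, nsmul_eq_mul, mul_inv_cancel₀ hcard.ne']) hz
  rw [← mul_sum, inv_mul_eq_div] at amgm
  calc ∏ i ∈ s, z i = (∏ i ∈ s, z i ^ (#s : ℝ)⁻¹) ^ #s := by
        rw [← prod_pow]
        refine prod_congr rfl fun i hi => ?_
        rw [← Real.rpow_mul_natCast (hz i hi), inv_mul_cancel₀ hcard.ne', Real.rpow_one]
    _ ≤ _ := pow_le_pow_left₀ (prod_nonneg fun i hi => Real.rpow_nonneg (hz i hi) _) amgm _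

lemma turanProd_le_div_add_one_pow (n r : ℕ) : (turanProd n r : ℝ) ≤ ((n : ℝ) / r + 1) ^ r := by
  rcases r.eq_zero_or_pos with rfl | hr
  · simp [turanProd]
  have hsum : ∑ i ∈ range r, (((n + i) / r + 1 : ℕ) : ℝ) = n + r := by
    rw [← Nat.cast_sum, sum_add_distrib, sum_range_add_div n hr]
    simp
  have hr' : (r : ℝ) ≠ 0 := by positivity
  calc (turanProd n r : ℝ) = ∏ i ∈ range r, (((n + i) / r + 1 : ℕ) : ℝ) := by
        rw [turanProd, Nat.cast_prod]
    _ ≤ _ := prod_le_sum_div_card_pow _ _ fun _ _ => Nat.cast_nonneg _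
    _ = _ := by rw [hsum, card_range, add_div, div_self hr']

namespace SimpleGraph

variable {α : Type*} [DecidableEq α] (G : SimpleGraph α) [DecidableRel G.Adj]

def cliquesIn (V : Finset α) : Finset (Finset α) := {S ∈ V.powerset | G.IsClique (S : Set α)}

variable {G}

@[simp]
lemma mem_cliquesIn {V S : Finset α} : S ∈ G.cliquesIn V ↔ S ⊆ V ∧ G.IsClique (S : Set α) := by
  simp [cliquesIn]

lemma cliquesIn_mono {V W : Finset α} (h : V ⊆ W) : G.cliquesIn V ⊆ G.cliquesIn W := fun _ hS =>
  mem_cliquesIn.2 ⟨(mem_cliquesIn.1 hS).1.trans h, (mem_cliquesIn.1 hS).2⟩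

lemma exists_isNClique_of_card_nonAdj_le {t : ℕ} :
    ∀ (k : ℕ) (V : Finset α), (∀ v ∈ V, #{u ∈ V | ¬ G.Adj v u} ≤ t) → k * t < #V + t →
      ∃ S ⊆ V, G.IsNClique k S
  | 0, _, _, _ => ⟨∅, empty_subset _, isNClique_zero.2 rfl⟩
  | k + 1, V, hV, hk => by
    obtain ⟨v, hv⟩ : V.Nonempty := card_pos.1 (by nlinarith)
    have hsplit := card_filter_add_card_filter_not (s := V) (fun u => G.Adj v u)
    obtain ⟨S, hSV, hS⟩ := exists_isNClique_of_card_nonAdj_le k {u ∈ V | G.Adj v u}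
      (fun u hu => (card_le_card (filter_subset_filter _ (filter_subset _ _))).trans
        (hV u (mem_filter.1 hu).1))
      (by have := hV v hv; rw [add_mul, one_mul] at hk; omega)
    exact ⟨insert v S, insert_subset hv (hSV.trans (filter_subset _ _)),
      hS.insert fun u hu => (mem_filter.1 (hSV hu)).2⟩

lemma exists_card_adj_add_le_card {r : ℕ} {V : Finset α} (hV : V.Nonempty)
    (hcl : ∀ S ∈ G.cliquesIn V, #S ≤ r) :
    ∃ v ∈ V, #{u ∈ V | G.Adj v u} + ((#V - 1) / r + 1) ≤ #V := by
  by_contra! h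
  obtain ⟨S, hSV, hS⟩ := exists_isNClique_of_card_nonAdj_le (G := G) (t := (#V - 1) / r) (r + 1) V
    (fun v hv => by
      have := card_filter_add_card_filter_not (s := V) (fun u => G.Adj v u); grind)
    (by
      have := Nat.div_mul_le_self (#V - 1) r
      have := hV.card_pos
      rw [add_one_mul, mul_comm]
      omega)
  have := hcl S (mem_cliquesIn.2 ⟨hSV, hS.isClique⟩)
  have := hS.card_eq
  omega

lemma card_cliquesIn_le_card_cliquesIn_erase_add (V : Finset α) (v : α) :
    #(G.cliquesIn V) ≤ #(G.cliquesIn (V.erase v)) + #(G.cliquesIn {u ∈ V | G.Adj v u}) := by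
  have hcover : G.cliquesIn V ⊆
      G.cliquesIn (V.erase v) ∪ (G.cliquesIn {u ∈ V | G.Adj v u}).image (insert v) := by
    intro S hS
    obtain ⟨hSV, hS⟩ := mem_cliquesIn.1 hS
    by_cases hvS : v ∈ S
    · refine mem_union_right _ (mem_image.2 ⟨S.erase v, mem_cliquesIn.2 ⟨fun u hu => ?_,
        hS.subset (by simp)⟩, insert_erase hvS⟩)
      obtain ⟨huv, huS⟩ := mem_erase.1 hu
      exact mem_filter.2 ⟨hSV huS, hS hvS huS huv.symm⟩
    · exact mem_union_left _ (mem_cliquesIn.2 ⟨subset_erase.2 ⟨hSV, hvS⟩, hS⟩)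
  calc #(G.cliquesIn V) ≤ _ := card_le_card hcover
    _ ≤ _ := card_union_le _ _
    _ ≤ _ := Nat.add_le_add_left card_image_le _

lemma card_cliquesIn_le_turanProd {r : ℕ} {V : Finset α}
    (hcl : ∀ S ∈ G.cliquesIn V, #S ≤ r) : #(G.cliquesIn V) ≤ turanProd #V r := by
  induction h : #V using Nat.strong_induction_on generalizing V r with | _ n ih =>
  rcases n with _ | n
  · rw [card_eq_zero.1 h, turanProd_zero_left]
    exact (card_eq_one.2 ⟨∅, by ext S; simp +contextual [subset_empty]⟩).le
  obtain ⟨w, hw⟩ : V.Nonempty := card_pos.1 (by omega)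
  rcases r with _ | r
  · have := hcl {w} (mem_cliquesIn.2 ⟨singleton_subset_iff.2 hw, by simp⟩)
    simp at this
  obtain ⟨v, hv, hdeg⟩ := exists_card_adj_add_le_card ⟨w, hw⟩ hcl
  rw [h, Nat.add_sub_cancel] at hdeg
  set N := {u ∈ V | G.Adj v u}
  have hNcl : ∀ S ∈ G.cliquesIn N, #S ≤ r := by
    intro S hS
    obtain ⟨hSN, hS⟩ := mem_cliquesIn.1 hS
    have hvS : v ∉ S := fun hvS => G.irrefl (mem_filter.1 (hSN hvS)).2
    have := hcl (insert v S) (mem_cliquesIn.2 ⟨insert_subset hv (hSN.trans (filter_subset _ _)),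
      by rw [coe_insert]; exact hS.insert fun u hu _ => (mem_filter.1 (hSN hu)).2⟩)
    rw [card_insert_of_notMem hvS] at this
    omega
  have hNcard : #N ≤ n - n / (r + 1) := by omega
  calc #(G.cliquesIn V) ≤ #(G.cliquesIn (V.erase v)) + #(G.cliquesIn N) :=
        card_cliquesIn_le_card_cliquesIn_erase_add V v
    _ ≤ turanProd n (r + 1) + turanProd (n - n / (r + 1)) r := by
        gcongr
        · exact ih n (by omega) (fun S hS => hcl S (cliquesIn_mono (erase_subset _ _) hS))
            (by rw [card_erase_of_mem hv, h, Nat.add_sub_cancel])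
        · have hNn : #N < n + 1 := by have := Nat.sub_le n (n / (r + 1)); omega
          exact (ih #N hNn hNcl rfl).trans (turanProd_mono_left r hNcard)
    _ = turanProd (n + 1) (r + 1) := (turanProd_succ_succ n r).symm

end SimpleGraph

namespace Finset

variable {α : Type*} [DecidableEq α]

def shatterGraph (F : Finset (Finset α)) : SimpleGraph α where
  Adj x y := x ≠ y ∧ F.Shatters {x, y}
  symm := ⟨fun x y h => ⟨h.1.symm, pair_comm x y ▸ h.2⟩⟩
  loopless := ⟨fun _ h => h.1 rfl⟩

instance (F : Finset (Finset α)) : DecidableRel F.shatterGraph.Adj :=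
  fun _ _ => inferInstanceAs (Decidable (_ ∧ _))

variable {F : Finset (Finset α)}

lemma isClique_shatterGraph_iff {S : Finset α} :
    F.shatterGraph.IsClique (S : Set α) ↔ ∀ J ⊆ S, #J = 2 → F.Shatters J := by
  refine ⟨fun hS J hJS hJ => ?_, fun hS x hx y hy hxy => ⟨hxy, hS _ ?_ (card_pair hxy)⟩⟩
  · obtain ⟨x, y, hxy, rfl⟩ := card_eq_two.1 hJ
    exact (hS (hJS (mem_insert_self x {y})) (hJS (mem_insert_of_mem (mem_singleton_self y))) hxy).2
  · exact insert_subset hx (singleton_subset_iff.2 hy)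

lemma shatterer_subset_cliquesIn [Fintype α] : F.shatterer ⊆ F.shatterGraph.cliquesIn univ :=
  fun S hS => SimpleGraph.mem_cliquesIn.2 ⟨subset_univ S,
    isClique_shatterGraph_iff.2 fun _ hJS _ => (mem_shatterer.1 hS).mono_right hJS⟩

end Finset

lemma shatters_iff_finset_shatters {n : ℕ} {F : Finset (Finset (Fin n))} {I : Finset (Fin n)} :
    _root_.Shatters F I ↔ F.Shatters I := by
  have htrace : F.image (fun A => A ∩ I) = F.image (fun A => I ∩ A) := by simp only [inter_comm]
  have hsub : F.image (fun A => I ∩ A) ⊆ I.powerset := fun _ h => by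
    obtain ⟨A, -, rfl⟩ := mem_image.1 h
    exact mem_powerset.2 inter_subset_left
  rw [_root_.Shatters, Finset.shatters_iff, htrace, ← card_powerset]
  exact ⟨eq_of_subset_of_card_le hsub ∘ ge_of_eq, fun h => h ▸ rfl⟩

lemma dUniversal_two_iff {n : ℕ} {F : Finset (Finset (Fin n))} {I : Finset (Fin n)} :
    DUniversal F 2 I ↔ 2 ≤ #I ∧ F.shatterGraph.IsClique (I : Set (Fin n)) := by
  simp only [DUniversal, shatters_iff_finset_shatters, isClique_shatterGraph_iff]

theorem card_le_of_not_hasU {n r : ℕ} (hr : 1 ≤ r) {F : Finset (Finset (Fin n))}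
    (hU : ¬ HasU F (r + 1) 2) : (#F : ℝ) ≤ ((n : ℝ) / r + 1) ^ r := by
  have hcl : ∀ S ∈ F.shatterGraph.cliquesIn univ, #S ≤ r := by
    intro S hS
    by_contra! hSr
    obtain ⟨I, hIS, hI⟩ := exists_subset_card_eq hSr
    exact hU ⟨I, hI, dUniversal_two_iff.2 ⟨by omega,
      (SimpleGraph.mem_cliquesIn.1 hS).2.subset (coe_subset.2 hIS)⟩⟩
  have hcard : #F ≤ turanProd n r := calc
    #F ≤ #F.shatterer := card_le_card_shatterer F
    _ ≤ #(F.shatterGraph.cliquesIn univ) := card_le_card shatterer_subset_cliquesIn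
    _ ≤ turanProd n r := by
      simpa using SimpleGraph.card_cliquesIn_le_turanProd hcl
  exact (Nat.cast_le.2 hcard).trans (turanProd_le_div_add_one_pow n r)

theorem stmt_2 :
    (∀ (n r : ℕ), 2 ≤ r → r ≤ n →
      ∀ F : Finset (Finset (Fin n)), ¬ HasU F (r + 1) 2 →
        (F.card : ℝ) ≤ ((n : ℝ) / r + 1) ^ r) ∧
    (∀ (n : ℕ) (F : Finset (Finset (Fin n))) (m : ℕ),
      IsGreatest {m' | ∃ I : Finset (Fin n), DUniversal F 2 I ∧ I.card = m'} m →
      (F.card : ℝ) ≤ ((n : ℝ) / m + 1) ^ m) := by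
  refine ⟨fun n r hr _ F hU => card_le_of_not_hasU (by omega) hU, fun n F m hm => ?_⟩
  obtain ⟨⟨I, hI, rfl⟩, hmax⟩ := hm
  refine card_le_of_not_hasU (by have := hI.1; omega) fun ⟨J, hJ, hJu⟩ => ?_
  have := hmax ⟨J, hJu, hJ⟩
  omega
end

section
/- Let d ≥ 2 and let r, n be positive integers with r ≤ n/d. Every d-uniform hypergraph H on n vertices having no transversal of size r − 1 has at most 2^{n − rd}·(2^d − 1)^r independent sets, and equality holds if and only if H is the disjoint union of r pairwise disjoint edges together with n − rd isolated vertices. Consequently, i(n, r, d) = 2^{n − rd}·(2^d − 1)^r. -/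
/-!
Write `c = 1 - 2⁻¹ ^ d`, the probability that a uniformly random set misses a fixed `d`-set.
Count the independent sets `S` with `A ⊆ S ⊆ W` when the edges inside `W` have no transversal of
fewer than `s` vertices. Take such an edge `e` and branch on its undecided vertices one at a time:
the branch whose first excluded vertex is `v` replaces `W` by `W \ {v}`, which lowers the
transversal bound by at most one, and the branch putting all of `e` into `S` is empty. Induction
gives at most `c ^ s * 2 ^ |W \ A|` such sets. If two edges `e ≠ f` meet in `w`, then once `w` is
put into `S` the edge `f` has only `d - 1` undecided vertices, and the bound becomes strict.
Pairwise disjoint edges give exactly `c ^ |E| * 2 ^ n` independent sets, which is `c ^ r * 2 ^ n`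
only when `|E| = r`.
-/

/-- `S` is an independent set of the `d`-uniform hypergraph with edge set `E` :
no `d`-element subset of `S` is an edge. -/
def IsIndep {n : ℕ} (E : Finset (Finset (Fin n))) (d : ℕ) (S : Finset (Fin n)) : Prop :=
  ∀ T ⊆ S, T.card = d → T ∉ E

/-- `T` is a transversal of the hypergraph with edge set `E` :
it meets every edge. -/
def IsTransversal {n : ℕ} (E : Finset (Finset (Fin n))) (T : Finset (Fin n)) : Prop :=
  ∀ e ∈ E, (e ∩ T).Nonempty

/-- The number of independent sets of the `d`-graph with edge set `E`. -/
noncomputable def numIndep {n : ℕ} (E : Finset (Finset (Fin n))) (d : ℕ) : ℕ :=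
  {S : Finset (Fin n) | IsIndep E d S}.ncard

/-- `i n r d` : the maximum number of independent sets in an `n`-vertex `d`-uniform
hypergraph with no transversal of size `r-1`. -/
noncomputable def iMax (n r d : ℕ) : ℕ :=
  sSup {m | ∃ E : Finset (Finset (Fin n)),
    (∀ e ∈ E, e.card = d) ∧
    (¬ ∃ T : Finset (Fin n), T.card = r - 1 ∧ IsTransversal E T) ∧
    numIndep E d = m}

open Finset

lemma one_sub_inv_two_pow_nonneg (d : ℕ) : (0 : ℝ) ≤ 1 - 2⁻¹ ^ d :=
  sub_nonneg.2 (pow_le_one₀ (by norm_num) (by norm_num))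

section Counting

variable {α : Type*} [DecidableEq α]

def numIndepIcc (E : Finset (Finset α)) (A W : Finset α) : ℕ :=
  #{S ∈ Icc A W | ∀ e ∈ E, ¬e ⊆ S}

def NoSmallTransversal (E : Finset (Finset α)) (W : Finset α) (s : ℕ) : Prop :=
  ∀ T : Finset α, #T < s → ∃ e ∈ E, e ⊆ W ∧ Disjoint e T

namespace NoSmallTransversal

variable {E : Finset (Finset α)} {W : Finset α} {s : ℕ}

lemma erase (h : NoSmallTransversal E W s) (v : α) :
    NoSmallTransversal E (W.erase v) (s - 1) := by
  intro T hT
  obtain ⟨e, he, heW, hdisj⟩ := h (insert v T) ((card_insert_le v T).trans_lt (by omega))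
  rw [disjoint_insert_right] at hdisj
  exact ⟨e, he, subset_erase.2 ⟨heW, hdisj.1⟩, hdisj.2⟩

lemma of_pairwise_disjoint (hdisj : (E : Set (Finset α)).Pairwise Disjoint)
    (hW : ∀ e ∈ E, e ⊆ W) : NoSmallTransversal E W #E := by
  intro T hT
  by_contra! hmeet
  have hmeet' : ∀ e ∈ E, (e ∩ T).Nonempty := fun e he =>
    not_disjoint_iff_nonempty_inter.1 (hmeet e he (hW e he))
  have := card_le_card_biUnion
    (fun e he f hf hef => (hdisj he hf hef).mono inter_subset_left inter_subset_left) hmeet'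
  exact (this.trans (card_le_card (biUnion_subset.2 fun e _ => inter_subset_right))).not_gt hT

end NoSmallTransversal

variable {E : Finset (Finset α)} {A W : Finset α}

lemma numIndepIcc_le_two_pow : numIndepIcc E A W ≤ 2 ^ #(W \ A) := by
  by_cases hAW : A ⊆ W
  · calc numIndepIcc E A W ≤ #(Icc A W) := card_filter_le _ _
      _ = 2 ^ #(W \ A) := by rw [card_Icc_finset hAW, card_sdiff_of_subset hAW]
  · rw [numIndepIcc, Icc_eq_empty hAW]; simp

lemma numIndepIcc_eq_zero {e : Finset α} (he : e ∈ E) (heA : e ⊆ A) :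
    numIndepIcc E A W = 0 := by
  rw [numIndepIcc, card_eq_zero, filter_eq_empty_iff]
  intro S hS hfree
  exact hfree e he (heA.trans (mem_Icc.1 hS).1)

lemma numIndepIcc_eq_add (v : α) :
    numIndepIcc E A W = numIndepIcc E (insert v A) W + numIndepIcc E A (W.erase v) := by
  rw [numIndepIcc, ← card_filter_add_card_filter_not (v ∈ ·), filter_filter, filter_filter]
  congr 2 <;> ext S <;> simp only [mem_filter, mem_Icc, insert_subset_iff, subset_erase] <;> tauto

/-- `B` is the density bound available once a vertex of `e` has been excluded from `S`. -/
lemma numIndepIcc_le_of_mem {e : Finset α} {B : ℝ} (he : e ∈ E) (heW : e ⊆ W)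
    (hout : ∀ A, ∀ v ∈ e, (numIndepIcc E A (W.erase v) : ℝ) ≤ B * 2 ^ #(W.erase v \ A))
    (A : Finset α) : (numIndepIcc E A W : ℝ) ≤ B * (1 - 2⁻¹ ^ #(e \ A)) * 2 ^ #(W \ A) := by
  induction hk : #(e \ A) generalizing A with
  | zero =>
    rw [numIndepIcc_eq_zero he (sdiff_eq_empty_iff_subset.1 (card_eq_zero.1 hk))]
    simp
  | succ k ih =>
    obtain ⟨v, hv⟩ : (e \ A).Nonempty := card_pos.1 (by omega)
    have hvWA : v ∈ W \ A := mem_sdiff.2 ⟨heW (mem_sdiff.1 hv).1, (mem_sdiff.1 hv).2⟩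
    have hin := ih (insert v A) (by rw [sdiff_insert, card_erase_of_mem hv, hk]; rfl)
    have hout' := hout A v (mem_sdiff.1 hv).1
    rw [sdiff_insert] at hin
    rw [erase_sdiff_comm] at hout'
    rw [numIndepIcc_eq_add v, Nat.cast_add, ← card_erase_add_one hvWA]
    calc _ ≤ B * (1 - 2⁻¹ ^ k) * 2 ^ #((W \ A).erase v) + B * 2 ^ #((W \ A).erase v) :=
          add_le_add hin hout'
      _ = _ := by ring

lemma numIndepIcc_le {d s : ℕ} (hE : ∀ e ∈ E, #e ≤ d) (h : NoSmallTransversal E W s)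
    (A : Finset α) : (numIndepIcc E A W : ℝ) ≤ (1 - 2⁻¹ ^ d) ^ s * 2 ^ #(W \ A) := by
  induction s generalizing W A with
  | zero => rw [pow_zero, one_mul]; exact_mod_cast numIndepIcc_le_two_pow
  | succ s ih =>
    obtain ⟨e, he, heW, -⟩ := h (∅ : Finset α) (by simp)
    calc (numIndepIcc E A W : ℝ)
        ≤ (1 - 2⁻¹ ^ d) ^ s * (1 - 2⁻¹ ^ #(e \ A)) * 2 ^ #(W \ A) :=
          numIndepIcc_le_of_mem he heW (fun A v _ => ih (h.erase v) A) A
      _ ≤ (1 - 2⁻¹ ^ d) ^ (s + 1) * 2 ^ #(W \ A) := by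
          rw [pow_succ]
          have hk : 2⁻¹ ^ d ≤ (2⁻¹ : ℝ) ^ #(e \ A) :=
            pow_le_pow_of_le_one (by norm_num) (by norm_num)
              ((card_le_card sdiff_subset).trans (hE e he))
          gcongr _ * (1 - ?_) * _
          exact pow_nonneg (one_sub_inv_two_pow_nonneg d) s

lemma numIndepIcc_lt {d s : ℕ} (hE : ∀ e ∈ E, #e ≤ d) (h : NoSmallTransversal E W s)
    {f : Finset α} (hf : f ∈ E) (hfW : f ⊆ W) (hfA : #(f \ A) < d) :
    (numIndepIcc E A W : ℝ) < (1 - 2⁻¹ ^ d) ^ s * 2 ^ #(W \ A) := by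
  have hlt : 1 - 2⁻¹ ^ #(f \ A) < (1 - 2⁻¹ ^ d : ℝ) := by
    gcongr 1 - ?_
    exact pow_lt_pow_right_of_lt_one₀ (by norm_num) (by norm_num) hfA
  calc (numIndepIcc E A W : ℝ)
      ≤ (1 - 2⁻¹ ^ d) ^ (s - 1) * (1 - 2⁻¹ ^ #(f \ A)) * 2 ^ #(W \ A) :=
        numIndepIcc_le_of_mem hf hfW (fun A v _ => numIndepIcc_le hE (h.erase v) A) A
    _ < (1 - 2⁻¹ ^ d) ^ s * 2 ^ #(W \ A) := by
        gcongr ?_ * _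
        rcases s with _ | s
        · simp
        · rw [Nat.add_sub_cancel, pow_succ]
          exact mul_lt_mul_of_pos_left hlt (pow_pos ((one_sub_inv_two_pow_nonneg _).trans_lt hlt) s)

lemma numIndepIcc_empty_lt {d r : ℕ} (hd : 2 ≤ d) (hE : ∀ e ∈ E, #e ≤ d)
    (h : NoSmallTransversal E W (r + 1)) {e f : Finset α} (he : e ∈ E) (hf : f ∈ E)
    (heW : e ⊆ W) (hfW : f ⊆ W) (hef : ¬Disjoint e f) (hfe : ¬e ⊆ f) :
    (numIndepIcc E ∅ W : ℝ) < (1 - 2⁻¹ ^ d) ^ (r + 1) * 2 ^ #W := by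
  obtain ⟨w, hwe, hwf⟩ := not_disjoint_iff.1 hef
  obtain ⟨u, hue, huf⟩ := not_subset.1 hfe
  have huw : u ≠ w := by rintro rfl; exact huf hwf
  set X := (W.erase w).erase u
  have hXw : #(W.erase w) = #X + 1 := (card_erase_add_one (mem_erase.2 ⟨huw, heW hue⟩)).symm
  have hXW : #W = #X + 2 := by rw [← card_erase_add_one (heW hwe), hXw]
  have h1 : (numIndepIcc E ∅ (W.erase w) : ℝ) ≤ (1 - 2⁻¹ ^ d) ^ r * 2 ^ (#X + 1) := by
    simpa [hXw] using numIndepIcc_le hE (h.erase w) ∅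
  have h2 : (numIndepIcc E {u, w} W : ℝ) ≤
      (1 - 2⁻¹ ^ d) ^ r * (1 - 2⁻¹ ^ (d - 2)) * 2 ^ #X := by
    have hsub : {u, w} ⊆ e := insert_subset hue (singleton_subset_iff.2 hwe)
    have hcard : #(e \ {u, w}) ≤ d - 2 := by
      rw [card_sdiff_of_subset hsub, card_pair huw]
      exact Nat.sub_le_sub_right (hE e he) 2
    calc (numIndepIcc E {u, w} W : ℝ)
        ≤ (1 - 2⁻¹ ^ d) ^ r * (1 - 2⁻¹ ^ #(e \ {u, w})) * 2 ^ #(W \ {u, w}) :=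
          numIndepIcc_le_of_mem he heW (fun A v _ => numIndepIcc_le hE (h.erase v) A) _
      _ ≤ (1 - 2⁻¹ ^ d) ^ r * (1 - 2⁻¹ ^ (d - 2)) * 2 ^ #X := by
          rw [show W \ {u, w} = X by rw [sdiff_insert, sdiff_singleton_eq_erase]]
          gcongr _ * (1 - ?_) * _
          · exact pow_nonneg (one_sub_inv_two_pow_nonneg d) r
          · exact pow_le_pow_of_le_one (by norm_num) (by norm_num) hcard
  -- once `w ∈ S`, the edge `f` has fewer than `d` undecided vertices
  have h3 : (numIndepIcc E {w} (W.erase u) : ℝ) < (1 - 2⁻¹ ^ d) ^ r * 2 ^ #X := by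
    have hfw : #(f \ {w}) < d :=
      (card_lt_card (sdiff_ssubset (singleton_subset_iff.2 hwf) (singleton_nonempty w))).trans_le
        (hE f hf)
    have hWX : W.erase u \ {w} = X := by rw [erase_sdiff_comm, sdiff_singleton_eq_erase]
    simpa [hWX] using numIndepIcc_lt hE (h.erase u) hf (subset_erase.2 ⟨hfW, huf⟩) hfw
  rw [numIndepIcc_eq_add w, numIndepIcc_eq_add u, insert_empty, Nat.cast_add, Nat.cast_add, hXW]
  obtain ⟨d, rfl⟩ := Nat.exists_eq_add_of_le' hd
  rw [Nat.add_sub_cancel] at h2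
  have hsum : (1 - 2⁻¹ ^ (d + 2) : ℝ) ^ (r + 1) * 2 ^ (#X + 2) =
      (1 - 2⁻¹ ^ (d + 2)) ^ r * (1 - 2⁻¹ ^ d) * 2 ^ #X + (1 - 2⁻¹ ^ (d + 2)) ^ r * 2 ^ #X +
        (1 - 2⁻¹ ^ (d + 2)) ^ r * 2 ^ (#X + 1) := by ring
  linarith

lemma pairwise_disjoint_of_numIndepIcc_eq {d r : ℕ} (hd : 2 ≤ d) (hE : ∀ e ∈ E, #e = d)
    (hW : ∀ e ∈ E, e ⊆ W) (h : NoSmallTransversal E W (r + 1))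
    (heq : (numIndepIcc E ∅ W : ℝ) = (1 - 2⁻¹ ^ d) ^ (r + 1) * 2 ^ #W) :
    (E : Set (Finset α)).Pairwise Disjoint := by
  intro e he f hf hef
  by_contra hmeet
  have hfe : ¬e ⊆ f := fun hsub => hef (eq_of_subset_of_card_le hsub (by rw [hE e he, hE f hf]))
  exact (numIndepIcc_empty_lt hd (fun e he => (hE e he).le) h he hf (hW e he) (hW f hf) hmeet
    hfe).ne heq

lemma numIndepIcc_insert_empty {e : Finset α} (heW : e ⊆ W) (hdisj : ∀ f ∈ E, Disjoint f e) :
    numIndepIcc (insert e E) ∅ W = (2 ^ #e - 1) * numIndepIcc E ∅ (W \ e) := by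
  rw [numIndepIcc, numIndepIcc, ← card_powerset e, ← card_erase_of_mem (mem_powerset_self e),
    ← card_product]
  refine card_nbij' (fun S => (S ∩ e, S \ e)) (fun p => p.2 ∪ p.1) ?_ ?_ ?_ ?_
  · intro S hS
    simp only [mem_coe, mem_filter, mem_product, mem_erase, mem_powerset, mem_Icc, empty_subset,
      true_and, forall_mem_insert] at hS ⊢
    obtain ⟨hSW, heS, hfree⟩ := hS
    exact ⟨⟨fun h => heS (inter_eq_right.1 h), inter_subset_right⟩,
      sdiff_subset_sdiff hSW le_rfl, fun g hg hgS => hfree g hg (hgS.trans sdiff_subset)⟩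
  · intro p hp
    simp only [mem_coe, mem_filter, mem_product, mem_erase, mem_powerset, mem_Icc, empty_subset,
      true_and, forall_mem_insert] at hp ⊢
    obtain ⟨⟨hne, hPe⟩, hQW, hfree⟩ := hp
    have hQe : Disjoint e p.2 := disjoint_sdiff.mono_right hQW
    exact ⟨union_subset (hQW.trans sdiff_subset) (hPe.trans heW),
      fun h => hne (hPe.antisymm (hQe.left_le_of_le_sup_left h)),
      fun g hg hgS => hfree g hg ((hdisj g hg).mono_right hPe |>.left_le_of_le_sup_right hgS)⟩
  · intro S _
    exact sdiff_union_inter S e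
  · rintro ⟨P, Q⟩ hp
    simp only [mem_coe, mem_product, mem_erase, mem_powerset, mem_filter, mem_Icc] at hp
    obtain ⟨⟨-, hPe⟩, ⟨-, hQW⟩, -⟩ := hp
    have hQe : Disjoint Q e := (disjoint_sdiff.mono_right hQW).symm
    refine Prod.ext ?_ ?_
    · dsimp only
      rw [union_inter_distrib_right, disjoint_iff_inter_eq_empty.1 hQe, inter_eq_left.2 hPe,
        empty_union]
    · dsimp only
      rw [union_sdiff_distrib, sdiff_eq_self_of_disjoint hQe, sdiff_eq_empty_iff_subset.2 hPe,
        union_empty]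

lemma numIndepIcc_empty_of_pairwise_disjoint {d : ℕ} (hE : ∀ e ∈ E, #e = d)
    (hdisj : (E : Set (Finset α)).Pairwise Disjoint) (hW : ∀ e ∈ E, e ⊆ W) :
    (numIndepIcc E ∅ W : ℝ) = (1 - 2⁻¹ ^ d) ^ #E * 2 ^ #W := by
  induction E using Finset.induction_on generalizing W with
  | empty =>
    rw [numIndepIcc, filter_true_of_mem (by simp), card_Icc_finset (empty_subset W)]
    simp
  | insert e E heE ih =>
    have hed := hE e (mem_insert_self e E)
    have hfe : ∀ f ∈ E, Disjoint f e := fun f hf =>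
      hdisj (mem_insert_of_mem hf) (mem_insert_self e E) (by rintro rfl; exact heE hf)
    have heW := hW e (mem_insert_self e E)
    rw [numIndepIcc_insert_empty heW hfe, Nat.cast_mul, Nat.cast_sub Nat.one_le_two_pow,
      ih (fun f hf => hE f (mem_insert_of_mem hf)) (hdisj.mono (by simp))
        (fun f hf => subset_sdiff.2 ⟨hW f (mem_insert_of_mem hf), hfe f hf⟩),
      card_insert_of_notMem heE, ← card_sdiff_add_card_eq_card heW, hed]
    have : (2 : ℝ)⁻¹ ^ d * 2 ^ d = 1 := by rw [← mul_pow]; norm_num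
    push_cast
    linear_combination (1 - 2⁻¹ ^ d) ^ #E * 2 ^ #(W \ e) * this

end Counting

lemma exists_pairwise_disjoint_card_eq {α : Type*} [Fintype α] {r d : ℕ} (hd : 0 < d)
    (h : r * d ≤ Fintype.card α) :
    ∃ E : Finset (Finset α),
      #E = r ∧ (∀ e ∈ E, #e = d) ∧ (E : Set (Finset α)).Pairwise Disjoint := by
  obtain ⟨φ⟩ :=
    Function.Embedding.nonempty_of_card_le (α := Fin r × Fin d) (β := α) (by simpa using h)
  let edge : Fin r → Finset α := fun i => ({i} ×ˢ univ).map φ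
  have hcard : ∀ i, #(edge i) = d := by simp [edge]
  have hdisj : ∀ i j, i ≠ j → Disjoint (edge i) (edge j) := fun i j hij =>
    (disjoint_map φ).2 (disjoint_product.2 (Or.inl (disjoint_singleton.2 hij)))
  have hinj : Function.Injective edge := fun i j hij => by
    by_contra hne
    have := hdisj i j hne
    rw [hij, disjoint_self, bot_eq_empty, ← card_eq_zero, hcard] at this
    omega
  refine ⟨univ.map ⟨edge, hinj⟩, by simp, by simp [hcard], ?_⟩
  rintro _ he _ hf hef
  simp only [coe_map, Set.mem_image, mem_coe, mem_univ, true_and] at he hf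
  obtain ⟨i, rfl⟩ := he
  obtain ⟨j, rfl⟩ := hf
  exact hdisj i j (fun h => hef (h ▸ rfl))

section FinVertices

variable {n d r : ℕ} {E : Finset (Finset (Fin n))}

lemma isIndep_iff (hE : ∀ e ∈ E, #e = d) {S : Finset (Fin n)} :
    IsIndep E d S ↔ ∀ e ∈ E, ¬e ⊆ S :=
  ⟨fun h e he heS => h e heS (hE e he) he, fun h T hTS _ hT => h T hT hTS⟩

lemma numIndep_eq_numIndepIcc (hE : ∀ e ∈ E, #e = d) :
    numIndep E d = numIndepIcc E ∅ univ := by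
  rw [numIndep, numIndepIcc, ← Set.ncard_coe_finset]
  congr 1
  ext S
  simp [isIndep_iff hE]

lemma noSmallTransversal_univ (hrn : r ≤ n + 1)
    (h : ¬∃ T : Finset (Fin n), #T = r - 1 ∧ IsTransversal E T) :
    NoSmallTransversal E univ r := by
  intro T hT
  obtain ⟨T', hTT', -, hT'⟩ := exists_subsuperset_card_eq (subset_univ T)
    (show #T ≤ r - 1 by omega) (by simp; omega)
  by_contra! hmeet
  exact h ⟨T', hT', fun e he =>
    (not_disjoint_iff_nonempty_inter.1 (hmeet e he (subset_univ e))).mono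
      (inter_subset_inter_left hTT')⟩

lemma not_exists_transversal_of_pairwise_disjoint
    (hdisj : (E : Set (Finset (Fin n))).Pairwise Disjoint) (hr : 1 ≤ #E) :
    ¬∃ T : Finset (Fin n), #T = #E - 1 ∧ IsTransversal E T := by
  rintro ⟨T, hT, htr⟩
  obtain ⟨e, he, -, heT⟩ :=
    NoSmallTransversal.of_pairwise_disjoint hdisj (fun e _ => subset_univ e) T (by omega)
  exact not_disjoint_iff_nonempty_inter.2 (htr e he) heT

lemma cast_two_pow_mul_pow (hrd : r * d ≤ n) :
    ((2 ^ (n - r * d) * (2 ^ d - 1) ^ r : ℕ) : ℝ) = (1 - 2⁻¹ ^ d) ^ r * 2 ^ n := by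
  obtain ⟨m, rfl⟩ := Nat.exists_eq_add_of_le hrd
  have : (2 : ℝ) ^ d - 1 = (1 - 2⁻¹ ^ d) * 2 ^ d := by
    rw [sub_mul, ← mul_pow]; norm_num
  rw [Nat.add_sub_cancel_left, Nat.cast_mul, Nat.cast_pow, Nat.cast_pow,
    Nat.cast_sub Nat.one_le_two_pow, Nat.cast_pow, Nat.cast_ofNat, Nat.cast_one, this, mul_pow,
    pow_add, mul_comm r d, pow_mul]
  ring

theorem numIndep_le_and_eq_iff (hd : 2 ≤ d) (hr : 1 ≤ r) (hrd : r * d ≤ n)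
    (hE : ∀ e ∈ E, #e = d) (hT : ¬∃ T : Finset (Fin n), #T = r - 1 ∧ IsTransversal E T) :
    numIndep E d ≤ 2 ^ (n - r * d) * (2 ^ d - 1) ^ r ∧
      (numIndep E d = 2 ^ (n - r * d) * (2 ^ d - 1) ^ r ↔
        #E = r ∧ ∀ e ∈ E, ∀ f ∈ E, e ≠ f → Disjoint e f) := by
  obtain ⟨s, rfl⟩ := Nat.exists_eq_add_of_le' hr
  have hτ := noSmallTransversal_univ (by nlinarith) hT
  have hW : ∀ e ∈ E, e ⊆ univ := fun e _ => subset_univ e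
  rw [← Nat.cast_le (α := ℝ), ← Nat.cast_inj (R := ℝ), cast_two_pow_mul_pow hrd,
    numIndep_eq_numIndepIcc hE]
  have hub := numIndepIcc_le (fun e he => (hE e he).le) hτ ∅
  simp only [sdiff_empty, card_univ, Fintype.card_fin] at hub
  refine ⟨hub, fun heq => ?_, fun ⟨hcard, hdisj⟩ => ?_⟩
  · have hdisj := pairwise_disjoint_of_numIndepIcc_eq hd hE hW hτ (by simpa using heq)
    rw [numIndepIcc_empty_of_pairwise_disjoint hE hdisj hW, card_univ, Fintype.card_fin] at heq
    have hc : (0 : ℝ) < 1 - 2⁻¹ ^ d :=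
      sub_pos.2 (pow_lt_one₀ (by norm_num) (by norm_num) (by omega))
    exact ⟨pow_right_injective₀ hc (by simp) (mul_right_cancel₀ (by positivity) heq),
      fun e he f hf => hdisj he hf⟩
  · rw [numIndepIcc_empty_of_pairwise_disjoint hE (fun e he f hf => hdisj e he f hf) hW,
      card_univ, Fintype.card_fin, hcard]

theorem stmt_4 (n r d : ℕ) (hd : 2 ≤ d) (hr : 1 ≤ r) (hrd : r * d ≤ n) :
    (∀ E : Finset (Finset (Fin n)), (∀ e ∈ E, e.card = d) →
      (¬ ∃ T : Finset (Fin n), T.card = r - 1 ∧ IsTransversal E T) →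
      numIndep E d ≤ 2 ^ (n - r * d) * (2 ^ d - 1) ^ r ∧
        (numIndep E d = 2 ^ (n - r * d) * (2 ^ d - 1) ^ r ↔
          E.card = r ∧ ∀ e ∈ E, ∀ f ∈ E, e ≠ f → Disjoint e f)) ∧
    iMax n r d = 2 ^ (n - r * d) * (2 ^ d - 1) ^ r := by
  have main := fun E hE hT => numIndep_le_and_eq_iff (E := E) hd hr hrd hE hT
  refine ⟨main, ?_⟩
  obtain ⟨E, hcard, hE, hdisj⟩ :=
    exists_pairwise_disjoint_card_eq (α := Fin n) (by omega : 0 < d) (by simpa using hrd)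
  have hT := not_exists_transversal_of_pairwise_disjoint hdisj (hcard ▸ hr)
  rw [hcard] at hT
  have hmax := (main E hE hT).2.2 ⟨hcard, fun e he f hf => hdisj he hf⟩
  refine IsGreatest.csSup_eq ⟨⟨E, hE, hT, hmax⟩, ?_⟩
  rintro _ ⟨E, hE, hT, rfl⟩
  exact (main E hE hT).1
end FinVertices
end

section
/- Let X be a finite set of size d ≥ 1 and let μ be a probability distribution on the subsets of X (i.e., μ(F) ≥ 0 for all F ⊆ X and Σ_{F ⊆ X} μ(F) = 1) such that μ(X) = 0 and μ(F) ≥ μ(F') whenever F ⊆ F' ⊆ X. Then Σ_{F ⊆ X} (d − |F|)·μ(F) ≥ d·2^{d−1}/(2^d − 1), and equality holds if and only if μ(F) = 1/(2^d − 1) for every proper subset F ⊊ X. -/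
/-!
Write `m j` for the average of `μ` over the `j`-element subsets of `X`. Double counting the pairs
`F ⊂ insert x F` shows that `m` is nonincreasing on `0, …, d`, by monotonicity of `μ`. Since
`μ X = 0`, the expectation is `∑_{j<d} C(d,j) (d - j) m j` and the total mass is
`∑_{j<d} C(d,j) m j = 1`, so the bound is Chebyshev's sum inequality for the two nonincreasing
sequences `d - j` and `m j` under the binomial weights. Equality in Chebyshev forces `m` to be
constant on `0, …, d - 1`. Then `μ ∅ = m 0` bounds every value of `μ`, and `m (d - 1)` is an average
of values at most `μ ∅`, so it equals `μ ∅` only if every `(d - 1)`-set has mass `μ ∅`. Every proper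
subset lies between `∅` and such a set, so `μ` is constant on proper subsets.
-/

open Finset

section Chebyshev

variable {ι R : Type*} [CommRing R] (s : Finset ι) (a b c : ι → R)

theorem two_mul_sum_mul_sum_sub_sum_mul_sum :
    2 * ((∑ i ∈ s, a i) * ∑ i ∈ s, a i * b i * c i - (∑ i ∈ s, a i * b i) * ∑ i ∈ s, a i * c i)
      = ∑ i ∈ s, ∑ j ∈ s, a i * a j * ((c i - c j) * (b i - b j)) := by
  have expand : ∀ i j, a i * a j * ((c i - c j) * (b i - b j)) =
      a i * b i * c i * a j - a i * b i * (a j * c j) - a i * c i * (a j * b j)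
        + a i * (a j * b j * c j) := fun i j => by ring
  simp only [expand, sum_add_distrib, sum_sub_distrib, ← mul_sum, ← sum_mul]
  ring

variable [LinearOrder R] [IsStrictOrderedRing R] {s a b c}

theorem sum_mul_sum_le_sum_mul_sum_of_monovaryOn (ha : ∀ i ∈ s, 0 ≤ a i)
    (hcb : MonovaryOn c b s) :
    (∑ i ∈ s, a i * b i) * ∑ i ∈ s, a i * c i ≤ (∑ i ∈ s, a i) * ∑ i ∈ s, a i * b i * c i := by
  have h := two_mul_sum_mul_sum_sub_sum_mul_sum s a b c
  have : 0 ≤ ∑ i ∈ s, ∑ j ∈ s, a i * a j * ((c i - c j) * (b i - b j)) :=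
    sum_nonneg fun i hi => sum_nonneg fun j hj =>
      mul_nonneg (mul_nonneg (ha i hi) (ha j hj)) (hcb.sub_mul_sub_nonneg hj hi)
  linarith

theorem sum_mul_sum_eq_sum_mul_sum_iff_of_monovaryOn (ha : ∀ i ∈ s, 0 < a i)
    (hb : Set.InjOn b s) (hcb : MonovaryOn c b s) :
    (∑ i ∈ s, a i * b i) * ∑ i ∈ s, a i * c i = (∑ i ∈ s, a i) * ∑ i ∈ s, a i * b i * c i ↔
      ∀ i ∈ s, ∀ j ∈ s, c i = c j := by
  have hterm : ∀ i ∈ s, ∀ j ∈ s, 0 ≤ a i * a j * ((c i - c j) * (b i - b j)) :=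
    fun i hi j hj => mul_nonneg (mul_nonneg (ha i hi).le (ha j hj).le)
      (hcb.sub_mul_sub_nonneg hj hi)
  have hterm_eq_zero : ∀ i ∈ s, ∀ j ∈ s,
      a i * a j * ((c i - c j) * (b i - b j)) = 0 ↔ c i = c j := by
    intro i hi j hj
    rw [mul_eq_zero_iff_left (mul_pos (ha i hi) (ha j hj)).ne', mul_eq_zero, sub_eq_zero,
      sub_eq_zero, or_iff_left_of_imp]
    exact fun hbij => by rw [hb hi hj hbij]
  rw [eq_comm, ← sub_eq_zero, ← mul_eq_zero_iff_left (two_ne_zero (α := R)),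
    two_mul_sum_mul_sum_sub_sum_mul_sum, sum_eq_zero_iff_of_nonneg fun i hi =>
      sum_nonneg (hterm i hi)]
  refine forall₂_congr fun i hi => ?_
  rw [sum_eq_zero_iff_of_nonneg (hterm i hi)]
  exact forall₂_congr (hterm_eq_zero i hi)

end Chebyshev

theorem sum_range_choose_eq_two_pow_sub_one {R : Type*} [Ring R] (n : ℕ) :
    ∑ j ∈ range n, (n.choose j : R) = 2 ^ n - 1 := by
  have h := congrArg (Nat.cast : ℕ → R) (Nat.sum_range_choose n)
  push_cast at h
  rw [sum_range_succ, Nat.choose_self, Nat.cast_one] at h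
  exact eq_sub_of_add_eq h

theorem sum_range_choose_mul_sub {R : Type*} [CommRing R] (n : ℕ) :
    ∑ j ∈ range n, (n.choose j : R) * (n - j) = n * 2 ^ (n - 1) := by
  have h := congrArg (Nat.cast : ℕ → R) (Nat.sum_range_mul_choose n)
  push_cast at h
  rw [← sum_range_reflect, sum_range_succ_comm, Nat.add_sub_cancel, Nat.sub_self, Nat.cast_zero,
    zero_mul, zero_add] at h
  rw [← h]
  refine sum_congr rfl fun j hj => ?_
  have hj : j ≤ n := (mem_range.mp hj).le
  rw [Nat.choose_symm hj, Nat.cast_sub hj, mul_comm]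

section Levels

variable {α : Type*} (X : Finset α)

theorem sum_powersetCard_sum_sdiff_insert [DecidableEq α] {M : Type*} [AddCommMonoid M] (j : ℕ)
    (f : Finset α → M) :
    ∑ F ∈ X.powersetCard j, ∑ x ∈ X \ F, f (insert x F) =
      (j + 1) • ∑ G ∈ X.powersetCard (j + 1), f G := by
  have hG : ∀ G ∈ X.powersetCard (j + 1), (j + 1) • f G = ∑ x ∈ G, f G := fun G hG => by
    rw [sum_const, (mem_powersetCard.mp hG).2]
  rw [smul_sum, sum_congr rfl hG, sum_sigma', sum_sigma']
  refine sum_nbij' (fun p => ⟨insert p.2 p.1, p.2⟩) (fun p => ⟨p.1.erase p.2, p.2⟩)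
    ?_ ?_ ?_ ?_ fun _ _ => rfl
  · rintro ⟨F, x⟩ hp
    simp only [mem_sigma, mem_powersetCard, mem_sdiff] at hp ⊢
    exact ⟨⟨insert_subset hp.2.1 hp.1.1, by rw [card_insert_of_notMem hp.2.2, hp.1.2]⟩,
      mem_insert_self _ _⟩
  · rintro ⟨G, x⟩ hp
    simp only [mem_sigma, mem_powersetCard, mem_sdiff] at hp ⊢
    exact ⟨⟨(erase_subset _ _).trans hp.1.1, by rw [card_erase_of_mem hp.2, hp.1.2]; rfl⟩,
      hp.1.1 hp.2, notMem_erase _ _⟩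
  · rintro ⟨F, x⟩ hp
    simp only [mem_sigma, mem_sdiff] at hp
    simp [erase_insert hp.2.2]
  · rintro ⟨G, x⟩ hp
    simp only [mem_sigma] at hp
    simp [insert_erase hp.2]

def levelSum {M : Type*} [AddCommMonoid M] (μ : Finset α → M) (j : ℕ) : M :=
  ∑ F ∈ X.powersetCard j, μ F

noncomputable def levelAvg (μ : Finset α → ℝ) (j : ℕ) : ℝ :=
  levelSum X μ j / (#X).choose j

theorem sum_powerset_mul_eq_sum_levelSum {R : Type*} [NonUnitalNonAssocSemiring R]
    (w : ℕ → R) (μ : Finset α → R) :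
    ∑ F ∈ X.powerset, w #F * μ F = ∑ j ∈ range (#X + 1), w j * levelSum X μ j := by
  rw [← sum_fiberwise_of_maps_to (g := card) (t := range (#X + 1))
    fun F hF => mem_range.mpr (Nat.lt_succ_of_le (card_le_card (mem_powerset.mp hF)))]
  refine sum_congr rfl fun j _ => ?_
  rw [levelSum, powersetCard_eq_filter, mul_sum]
  exact sum_congr rfl fun F hF => by rw [(mem_filter.mp hF).2]

variable {X} {μ : Finset α → ℝ}

theorem choose_mul_levelAvg {j : ℕ} (hj : j ≤ #X) :
    ((#X).choose j : ℝ) * levelAvg X μ j = levelSum X μ j :=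
  mul_div_cancel₀ _ (Nat.cast_ne_zero.mpr (Nat.choose_pos hj).ne')

theorem levelAvg_zero : levelAvg X μ 0 = μ ∅ := by
  rw [levelAvg, levelSum, powersetCard_zero, sum_singleton, Nat.choose_zero_right, Nat.cast_one,
    div_one]

theorem sum_powerset_mul_eq_sum_range_levelAvg (hμX : μ X = 0) (w : ℕ → ℝ) :
    ∑ F ∈ X.powerset, w #F * μ F = ∑ j ∈ range #X, (#X).choose j * w j * levelAvg X μ j := by
  rw [sum_powerset_mul_eq_sum_levelSum, sum_range_succ, levelSum, powersetCard_self,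
    sum_singleton, hμX, mul_zero, add_zero]
  refine sum_congr rfl fun j hj => ?_
  rw [← choose_mul_levelAvg (mem_range.mp hj).le]
  ring

theorem succ_mul_levelSum_succ_le [DecidableEq α] (hμ : ∀ F G, F ⊆ G → G ⊆ X → μ G ≤ μ F)
    (j : ℕ) :
    (j + 1 : ℝ) * levelSum X μ (j + 1) ≤ (#X - j : ℝ) * levelSum X μ j :=
  calc (j + 1 : ℝ) * levelSum X μ (j + 1)
      = ∑ F ∈ X.powersetCard j, ∑ x ∈ X \ F, μ (insert x F) := by
        rw [sum_powersetCard_sum_sdiff_insert, nsmul_eq_mul, levelSum, Nat.cast_succ]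
    _ ≤ ∑ F ∈ X.powersetCard j, ∑ x ∈ X \ F, μ F := by
        refine sum_le_sum fun F hF => sum_le_sum fun x hx => ?_
        have hFX := (mem_powersetCard.mp hF).1
        exact hμ F _ (subset_insert x F) (insert_subset (mem_sdiff.mp hx).1 hFX)
    _ = (#X - j : ℝ) * levelSum X μ j := by
        rw [levelSum, mul_sum]
        refine sum_congr rfl fun F hF => ?_
        obtain ⟨hFX, rfl⟩ := mem_powersetCard.mp hF
        rw [sum_const, card_sdiff_of_subset hFX, nsmul_eq_mul, Nat.cast_sub (card_le_card hFX)]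

theorem levelAvg_succ_le [DecidableEq α] (hμ : ∀ F G, F ⊆ G → G ⊆ X → μ G ≤ μ F) {j : ℕ}
    (hj : j < #X) : levelAvg X μ (j + 1) ≤ levelAvg X μ j := by
  have hC : ((#X).choose (j + 1) : ℝ) * (j + 1) = (#X).choose j * (#X - j) := by
    have h := congrArg (Nat.cast : ℕ → ℝ) (Nat.choose_succ_right_eq (#X) j)
    push_cast [Nat.cast_sub hj.le] at h
    exact h
  have hCj : (0 : ℝ) < (#X).choose j := Nat.cast_pos.mpr (Nat.choose_pos hj.le)
  have hCj1 : (0 : ℝ) < (#X).choose (j + 1) := Nat.cast_pos.mpr (Nat.choose_pos hj)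
  rw [levelAvg, levelAvg, div_le_div_iff₀ hCj1 hCj]
  refine le_of_mul_le_mul_left ?_ (by positivity : (0 : ℝ) < j + 1)
  calc (j + 1 : ℝ) * (levelSum X μ (j + 1) * (#X).choose j)
      = (j + 1) * levelSum X μ (j + 1) * (#X).choose j := by ring
    _ ≤ (#X - j) * levelSum X μ j * (#X).choose j :=
        mul_le_mul_of_nonneg_right (succ_mul_levelSum_succ_le hμ j) hCj.le
    _ = (j + 1) * (levelSum X μ j * (#X).choose (j + 1)) := by
        linear_combination levelSum X μ j * hC.symm

theorem levelAvg_le_levelAvg [DecidableEq α] (hμ : ∀ F G, F ⊆ G → G ⊆ X → μ G ≤ μ F)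
    {i j : ℕ} (hij : i ≤ j) (hj : j ≤ #X) :
    levelAvg X μ j ≤ levelAvg X μ i := by
  induction j, hij using Nat.le_induction with
  | base => rfl
  | succ j _ ih => exact (levelAvg_succ_le hμ hj).trans (ih (by omega))

theorem apply_eq_apply_empty_of_levelAvg_pred_eq (hμ : ∀ F G, F ⊆ G → G ⊆ X → μ G ≤ μ F)
    (h : levelAvg X μ (#X - 1) = levelAvg X μ 0) {F : Finset α} (hF : F ⊂ X) : μ F = μ ∅ := by
  have htop : ∀ G ∈ X.powersetCard (#X - 1), μ G = μ ∅ := by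
    have hle : ∀ G ∈ X.powersetCard (#X - 1), μ G ≤ μ ∅ :=
      fun G hG => hμ ∅ G (empty_subset G) (mem_powersetCard.mp hG).1
    refine (sum_eq_sum_iff_of_le hle).mp ?_
    rw [sum_const, card_powersetCard, nsmul_eq_mul, ← levelAvg_zero (X := X) (μ := μ), ← h,
      choose_mul_levelAvg (Nat.sub_le _ _), levelSum]
  have hFcard : #F ≤ #X - 1 := Nat.le_sub_one_of_lt (card_lt_card hF)
  obtain ⟨G, hFG, hGX, hG⟩ := exists_subsuperset_card_eq hF.subset hFcard (Nat.sub_le _ _)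
  refine le_antisymm (hμ ∅ F (empty_subset F) hF.subset) ?_
  rw [← htop G (mem_powersetCard.mpr ⟨hGX, hG⟩)]
  exact hμ F G hFG hGX

theorem sum_range_choose_mul_levelAvg (hμX : μ X = 0) :
    ∑ j ∈ range #X, (#X).choose j * levelAvg X μ j = ∑ F ∈ X.powerset, μ F := by
  simpa using (sum_powerset_mul_eq_sum_range_levelAvg hμX fun _ => 1).symm

theorem ssubset_of_mem_powersetCard {F : Finset α} {j : ℕ} (hF : F ∈ X.powersetCard j)
    (hj : j < #X) : F ⊂ X := by
  obtain ⟨hFX, rfl⟩ := mem_powersetCard.mp hF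
  exact hFX.ssubset_of_ne (by rintro rfl; exact lt_irrefl _ hj)

theorem forall_levelAvg_eq_iff (hμ : ∀ F G, F ⊆ G → G ⊆ X → μ G ≤ μ F)
    (hX : X.Nonempty) (htotal : ∑ F ∈ X.powerset, μ F = 1) (hμX : μ X = 0) :
    (∀ i ∈ range #X, ∀ j ∈ range #X, levelAvg X μ i = levelAvg X μ j) ↔
      ∀ F ⊂ X, μ F = 1 / (2 ^ #X - 1) := by
  have hd : 0 < #X := card_pos.mpr hX
  have hT : (2 : ℝ) ^ #X - 1 ≠ 0 := by
    rw [sub_ne_zero]; exact (one_lt_pow₀ one_lt_two hd.ne').ne'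
  have hmass := (sum_range_choose_mul_levelAvg hμX).trans htotal
  constructor
  · intro hc
    have hconst : ∀ j ∈ range #X, levelAvg X μ j = μ ∅ :=
      fun j hj => (hc j hj 0 (mem_range.mpr hd)).trans levelAvg_zero
    have hempty : μ ∅ = 1 / (2 ^ #X - 1) := by
      rw [sum_congr rfl fun j hj => by rw [hconst j hj], ← sum_mul,
        sum_range_choose_eq_two_pow_sub_one] at hmass
      rw [eq_div_iff hT, mul_comm, hmass]
    intro F hF
    rw [← hempty]
    exact apply_eq_apply_empty_of_levelAvg_pred_eq hμ
      (hc _ (mem_range.mpr (Nat.sub_one_lt hd.ne')) 0 (mem_range.mpr hd)) hF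
  · intro hu
    have hlevel : ∀ j ∈ range #X, levelAvg X μ j = 1 / (2 ^ #X - 1) := by
      intro j hj
      have hj := mem_range.mp hj
      rw [levelAvg, levelSum, div_eq_iff (Nat.cast_ne_zero.mpr (Nat.choose_pos hj.le).ne'),
        sum_congr rfl fun F hF => hu F (ssubset_of_mem_powersetCard hF hj), sum_const,
        card_powersetCard, nsmul_eq_mul, mul_comm]
    intro i hi j hj
    rw [hlevel i hi, hlevel j hj]

end Levels

theorem stmt_6_general {α : Type*} [DecidableEq α] (X : Finset α) (d : ℕ) (hd : 1 ≤ d)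
    (hX : X.card = d) (μ : Finset α → ℝ)
    (htotal : ∑ F ∈ X.powerset, μ F = 1)
    (hμX : μ X = 0)
    (hmono : ∀ F F' : Finset α, F ⊆ F' → F' ⊆ X → μ F' ≤ μ F) :
    (d : ℝ) * 2 ^ (d - 1) / (2 ^ d - 1) ≤
        ∑ F ∈ X.powerset, ((d : ℝ) - F.card) * μ F ∧
      (∑ F ∈ X.powerset, ((d : ℝ) - F.card) * μ F =
          (d : ℝ) * 2 ^ (d - 1) / (2 ^ d - 1) ↔
        ∀ F ⊆ X, F ≠ X → μ F = 1 / (2 ^ d - 1)) := by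
  subst hX
  have hT : (0 : ℝ) < 2 ^ #X - 1 := sub_pos.mpr (one_lt_pow₀ one_lt_two (by omega))
  have hcb : MonovaryOn (levelAvg X μ) (fun j => (#X : ℝ) - j) (range #X) :=
    fun i hi j _ hij => levelAvg_le_levelAvg hmono
      (Nat.cast_le.mp (sub_le_sub_iff_left _ |>.mp hij.le)) (mem_range.mp hi).le
  have hE := sum_powerset_mul_eq_sum_range_levelAvg hμX fun j => (#X : ℝ) - j
  have hle := sum_mul_sum_le_sum_mul_sum_of_monovaryOn
    (fun j _ => Nat.cast_nonneg ((#X).choose j)) hcb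
  have heq := sum_mul_sum_eq_sum_mul_sum_iff_of_monovaryOn
    (fun j hj => Nat.cast_pos.mpr (Nat.choose_pos (mem_range.mp hj).le))
    (fun i _ j _ h => by simpa using h) hcb
  rw [sum_range_choose_mul_sub, sum_range_choose_eq_two_pow_sub_one,
    sum_range_choose_mul_levelAvg hμX, htotal, mul_one, ← hE] at hle heq
  refine ⟨(div_le_iff₀ hT).mpr (by linarith), ?_⟩
  rw [eq_div_iff hT.ne', mul_comm, eq_comm, heq, forall_levelAvg_eq_iff hmono (card_pos.mp hd)
    htotal hμX]
  simp only [ssubset_iff_subset_ne, and_imp]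

theorem stmt_6 {α : Type*} [DecidableEq α] (X : Finset α) (d : ℕ) (hd : 1 ≤ d)
    (hX : X.card = d) (μ : Finset α → ℝ)
    (hnonneg : ∀ F ⊆ X, 0 ≤ μ F)
    (htotal : ∑ F ∈ X.powerset, μ F = 1)
    (hμX : μ X = 0)
    (hmono : ∀ F F' : Finset α, F ⊆ F' → F' ⊆ X → μ F' ≤ μ F) :
    (d : ℝ) * 2 ^ (d - 1) / (2 ^ d - 1) ≤
        ∑ F ∈ X.powerset, ((d : ℝ) - F.card) * μ F ∧
      (∑ F ∈ X.powerset, ((d : ℝ) - F.card) * μ F =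
          (d : ℝ) * 2 ^ (d - 1) / (2 ^ d - 1) ↔
        ∀ F ⊆ X, F ≠ X → μ F = 1 / (2 ^ d - 1)) :=
  stmt_6_general X d hd hX μ htotal hμX hmono
end

section
/- There exists a universal constant δ > 0 such that for every n and every 3-CNF formula φ in n Boolean variables with |sat(φ)| ≥ 7^{n/3}, the set sat(φ) contains a projection of dimension at least δ·n. -/
/-- A literal is a pair (variable, required value); an assignment `x` satisfies a
clause (a finite set of literals, interpreted as their disjunction) if some literal
of the clause gets its required value. -/
def ClauseSat {n : ℕ} (C : Finset (Fin n × ZMod 2)) (x : Fin n → ZMod 2) : Prop :=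
  ∃ l ∈ C, x l.1 = l.2

/-- The set of satisfying assignments of a CNF formula (a finite list of clauses,
interpreted as their conjunction). -/
def SatAssignments {n : ℕ} (φ : List (Finset (Fin n × ZMod 2))) :
    Set (Fin n → ZMod 2) :=
  {x | ∀ C ∈ φ, ClauseSat C x}

/-- A `k`-CNF formula: every clause has at most `k` literals. -/
def IsKCnf {n : ℕ} (k : ℕ) (φ : List (Finset (Fin n × ZMod 2))) : Prop :=
  ∀ C ∈ φ, C.card ≤ k

/-- `P` is a projection of dimension `δ` in `{0,1}^n`. -/
def IsProjection {n : ℕ} (δ : ℕ) (P : Set (Fin n → ZMod 2)) : Prop :=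
  ∃ A B : Fin (δ + 1) → Finset (Fin n),
    (∀ i, Disjoint (A i) (B i)) ∧
    (∀ i j, i ≠ j → Disjoint (A i ∪ B i) (A j ∪ B j)) ∧
    (Finset.univ.biUnion fun i => A i ∪ B i) = Finset.univ ∧
    (∀ i, i ≠ 0 → (A i ∪ B i).Nonempty) ∧
    P = {x | (∀ j ∈ A 0, x j = 0) ∧ (∀ j ∈ B 0, x j = 1) ∧
      ∀ i, i ≠ 0 → ∃ b : ZMod 2,
        (∀ j ∈ A i, x j = b) ∧ (∀ j ∈ B i, x j = 1 - b)}

/-!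
A DPLL-style branching argument. Fix `λ ≤ 2` with `λ⁻¹ + ⋯ + λ⁻ᵏ ≤ 1`. By induction on the
number `u` of free variables of a partial assignment `ρ`, the set `sat φ ∩ ext ρ`, if nonempty,
contains a projection of some dimension `m` with `|sat φ ∩ ext ρ| ≤ λ^u (2/λ)^m`.
If every clause is satisfied by `ρ` or tautological, `sat φ ∩ ext ρ = ext ρ` is itself a
projection of dimension `u` with `2^u = λ^u (2/λ)^u` points. Otherwise some clause is not yet
satisfied; its free literals `l₁, …, lⱼ` (`j ≤ k`) live on distinct variables, and the branches
"`l₁` true", "`l₁` false and `l₂` true", … fix `1, 2, …, j` further variables. Keeping the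
projection of largest dimension among the branches, their bounds add up to at most
`λ^u (λ⁻¹ + ⋯ + λ⁻ʲ) (2/λ)^m`. For `k = 3` take `λ = 15/8`: then
`7^{n/3} ≤ (15/8)^n (16/15)^m` forces `m ≥ n/4`.
-/

namespace CnfProjection

open Finset

variable {n : ℕ}

lemma zmod_two_eq_zero_or_one : ∀ a : ZMod 2, a = 0 ∨ a = 1 := by decide

lemma zmod_two_eq_or_eq_add_one : ∀ a b : ZMod 2, a = b ∨ a = b + 1 := by decide

lemma zmod_two_add_one_ne : ∀ b : ZMod 2, b + 1 ≠ b := by decide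

lemma zmod_two_eq_or_eq_of_ne : ∀ a b : ZMod 2, a ≠ b → ∀ c, c = a ∨ c = b := by decide

-- `ρ v = none` leaves `v` free, `ρ v = some b` fixes it to `b`.
def extensions (ρ : Fin n → Option (ZMod 2)) : Set (Fin n → ZMod 2) :=
  {x | ∀ v b, ρ v = some b → x v = b}

def freeVars (ρ : Fin n → Option (ZMod 2)) : Finset (Fin n) :=
  {v | ρ v = none}

lemma mem_freeVars {ρ : Fin n → Option (ZMod 2)} {v : Fin n} : v ∈ freeVars ρ ↔ ρ v = none := by
  simp [freeVars]

lemma freeVars_update (ρ : Fin n → Option (ZMod 2)) (v : Fin n) (b : ZMod 2) :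
    freeVars (Function.update ρ v (some b)) = (freeVars ρ).erase v := by
  ext w
  rcases eq_or_ne w v with rfl | hwv
  · simp [mem_freeVars]
  · simp [mem_freeVars, hwv]

lemma extensions_eq_union_update {ρ : Fin n → Option (ZMod 2)} {v : Fin n} (hv : ρ v = none)
    (b : ZMod 2) :
    extensions ρ = extensions (Function.update ρ v (some b)) ∪
      extensions (Function.update ρ v (some (b + 1))) := by
  ext x
  simp only [extensions, Set.mem_union, Set.mem_ofPred_eq]
  constructor
  · intro hx
    have hupdate : ∀ c, x v = c → ∀ w d, Function.update ρ v (some c) w = some d → x w = d := by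
      intro c hc w d hw
      rcases eq_or_ne w v with rfl | hwv
      · simp_all
      · exact hx w d (by rwa [Function.update_of_ne hwv] at hw)
    rcases zmod_two_eq_or_eq_add_one (x v) b with h | h
    · exact .inl (hupdate b h)
    · exact .inr (hupdate (b + 1) h)
  · intro hx w d hw
    have hwv : w ≠ v := by rintro rfl; simp_all
    rcases hx with hx | hx <;> exact hx w d (by rwa [Function.update_of_ne hwv])

lemma ncard_extensions_le (ρ : Fin n → Option (ZMod 2)) :
    (extensions ρ).ncard ≤ 2 ^ (freeVars ρ).card := by
  have hinj : Set.InjOn (fun x (v : freeVars ρ) => x v) (extensions ρ) := by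
    intro x hx y hy hxy
    funext w
    cases hw : ρ w with
    | none => exact congrFun hxy ⟨w, mem_freeVars.mpr hw⟩
    | some b => rw [hx w b hw, hy w b hw]
  calc (extensions ρ).ncard ≤ (Set.univ : Set (freeVars ρ → ZMod 2)).ncard :=
        Set.ncard_le_ncard_of_injOn _ (fun _ _ => Set.mem_univ _) hinj Set.finite_univ
    _ = 2 ^ (freeVars ρ).card := by simp [Set.ncard_univ]

lemma isProjection_extensions (ρ : Fin n → Option (ZMod 2)) :
    IsProjection (freeVars ρ).card (extensions ρ) := by
  -- Block `0` holds the fixed variables; each free variable forms a block of its own.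
  let e := (freeVars ρ).equivFin.symm
  have he : ∀ i, ρ (e i) = none := fun i => mem_freeVars.mp (e i).2
  refine ⟨Fin.cases {v | ρ v = some 0} fun i => {(e i : Fin n)},
    Fin.cases {v | ρ v = some 1} fun _ => ∅, ?_, ?_, ?_, ?_, ?_⟩
  · refine Fin.cases ?_ (fun i => by simp)
    simp only [Fin.cases_zero, disjoint_left, mem_filter, mem_univ, true_and]
    intro v h0 h1
    simp_all
  · refine Fin.cases (Fin.cases (by simp) fun j _ => ?_)
      fun i => Fin.cases (fun _ => ?_) fun j hij => ?_
    · simp [he]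
    · simp [he]
    · simpa [e] using hij
  · refine eq_univ_of_forall fun v => ?_
    simp only [mem_biUnion, mem_univ, true_and]
    cases hv : ρ v with
    | none => exact ⟨(e.symm ⟨v, mem_freeVars.mpr hv⟩).succ, by simp⟩
    | some b =>
      refine ⟨0, ?_⟩
      rcases zmod_two_eq_zero_or_one b with rfl | rfl <;> simp [hv]
  · exact Fin.cases (by simp) fun i _ => by simp
  · ext x
    simp only [extensions, Set.mem_ofPred_eq, Fin.forall_fin_succ, Fin.cases_zero, Fin.cases_succ]
    simp only [mem_filter, mem_univ, true_and, mem_singleton, forall_eq, notMem_empty, ne_eq,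
      not_true_eq_false, IsEmpty.forall_iff, and_true, exists_eq', implies_true]
    constructor
    · exact fun hx => ⟨fun v hv => hx v 0 hv, fun v hv => hx v 1 hv⟩
    · rintro ⟨h0, h1⟩ v b hv
      rcases zmod_two_eq_zero_or_one b with rfl | rfl
      exacts [h0 v hv, h1 v hv]

def ProjectionBound (c a : ℝ) (S : Set (Fin n → ZMod 2)) : Prop :=
  S.Nonempty → ∃ m P, IsProjection m P ∧ P ⊆ S ∧ (S.ncard : ℝ) ≤ a * c ^ m

lemma ProjectionBound.mono {c a a' : ℝ} {S : Set (Fin n → ZMod 2)} (h : ProjectionBound c a S)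
    (ha : a ≤ a') (hc : 0 ≤ c) : ProjectionBound c a' S := fun hS => by
  obtain ⟨m, P, hP, hPS, hcard⟩ := h hS
  exact ⟨m, P, hP, hPS, hcard.trans (by gcongr)⟩

lemma ProjectionBound.union {c a b : ℝ} {S T : Set (Fin n → ZMod 2)} (hc : 1 ≤ c)
    (ha : 0 ≤ a) (hb : 0 ≤ b) (hS : ProjectionBound c a S) (hT : ProjectionBound c b T) :
    ProjectionBound c (a + b) (S ∪ T) := by
  have hc0 : 0 ≤ c := zero_le_one.trans hc
  rcases S.eq_empty_or_nonempty with rfl | hSne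
  · simpa using hT.mono (le_add_of_nonneg_left ha) hc0
  rcases T.eq_empty_or_nonempty with rfl | hTne
  · simpa using hS.mono (le_add_of_nonneg_right hb) hc0
  intro _
  obtain ⟨m, P, hP, hPS, hSm⟩ := hS hSne
  obtain ⟨k, Q, hQ, hQT, hTk⟩ := hT hTne
  have hcard : ((S ∪ T).ncard : ℝ) ≤ a * c ^ max m k + b * c ^ max m k :=
    calc ((S ∪ T).ncard : ℝ) ≤ S.ncard + T.ncard := by exact_mod_cast Set.ncard_union_le S T
      _ ≤ a * c ^ m + b * c ^ k := add_le_add hSm hTk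
      _ ≤ a * c ^ max m k + b * c ^ max m k := by
        gcongr <;> first | exact hc | exact le_max_left m k | exact le_max_right m k
  rw [← add_mul] at hcard
  rcases le_total m k with hmk | hkm
  · exact ⟨k, Q, hQ, hQT.trans Set.subset_union_right, by rwa [max_eq_right hmk] at hcard⟩
  · exact ⟨m, P, hP, hPS.trans Set.subset_union_left, by rwa [max_eq_left hkm] at hcard⟩

lemma projectionBound_extensions {lam : ℝ} (hlam : 0 < lam) (ρ : Fin n → Option (ZMod 2)) :
    ProjectionBound (2 / lam) (lam ^ (freeVars ρ).card) (extensions ρ) := fun _ => by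
  refine ⟨_, _, isProjection_extensions ρ, subset_rfl, ?_⟩
  rw [← mul_pow, mul_div_cancel₀ _ hlam.ne']
  exact_mod_cast ncard_extensions_le ρ

noncomputable def geomWeight (lam : ℝ) (k : ℕ) : ℝ := ∑ i ∈ range k, lam⁻¹ ^ (i + 1)

lemma geomWeight_succ (lam : ℝ) (k : ℕ) :
    geomWeight lam (k + 1) = lam⁻¹ * (1 + geomWeight lam k) := by
  simp only [geomWeight, sum_range_succ', mul_add, mul_sum, ← pow_succ']
  ring

lemma geomWeight_nonneg {lam : ℝ} (hlam : 0 ≤ lam) (k : ℕ) : 0 ≤ geomWeight lam k :=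
  sum_nonneg fun _ _ => by positivity

lemma geomWeight_mono {lam : ℝ} (hlam : 0 ≤ lam) : Monotone (geomWeight lam) := fun _ _ hkl =>
  sum_le_sum_of_subset_of_nonneg (range_mono hkl) fun _ _ _ => by positivity

lemma projectionBound_of_cover {S : Set (Fin n → ZMod 2)} {c lam : ℝ} (hc : 1 ≤ c)
    (hlam : 0 < lam) (F : Finset (Fin n × ZMod 2)) (ρ : Fin n → Option (ZMod 2))
    (hF : ∀ l ∈ F, ρ l.1 = none) (hinj : Set.InjOn Prod.fst (F : Set (Fin n × ZMod 2)))
    (hcover : ∀ x ∈ S ∩ extensions ρ, ∃ l ∈ F, x l.1 = l.2)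
    (IH : ∀ ρ', (freeVars ρ').card < (freeVars ρ).card →
      ProjectionBound c (lam ^ (freeVars ρ').card) (S ∩ extensions ρ')) :
    ProjectionBound c (lam ^ (freeVars ρ).card * geomWeight lam F.card) (S ∩ extensions ρ) := by
  induction F using Finset.induction_on generalizing ρ with
  | empty =>
    rintro ⟨x, hx⟩
    simpa using hcover x hx
  | insert l₀ F hl₀ ih =>
    -- Either `l₀` is true (`ρ₁`), or it is false and then a literal of `F` is true (`ρ₂`).
    set v := l₀.1
    have hv : ρ v = none := hF l₀ (mem_insert_self _ _)
    rw [coe_insert, Set.injOn_insert (by exact_mod_cast hl₀)] at hinj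
    have hcard : ∀ b, (freeVars (Function.update ρ v (some b))).card + 1 = (freeVars ρ).card :=
      fun b => by rw [freeVars_update, card_erase_add_one (mem_freeVars.mpr hv)]
    have hsplit := extensions_eq_union_update hv l₀.2
    set ρ₁ := Function.update ρ v (some l₀.2)
    set ρ₂ := Function.update ρ v (some (l₀.2 + 1)) with hρ₂
    have hcard₁ : (freeVars ρ₁).card + 1 = (freeVars ρ).card := hcard _
    have hcard₂ : (freeVars ρ₂).card + 1 = (freeVars ρ).card := hcard _
    have H₁ := IH ρ₁ (by omega)
    have H₂ : ProjectionBound c (lam ^ (freeVars ρ₂).card * geomWeight lam F.card)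
        (S ∩ extensions ρ₂) := by
      refine ih ρ₂ (fun l hl => ?_) hinj.1 (fun x hx => ?_) (fun ρ' h => IH ρ' (by omega))
      · have hlv : l.1 ≠ v := fun h => hinj.2 ⟨l, hl, h⟩
        rw [hρ₂, Function.update_of_ne hlv]
        exact hF l (mem_insert_of_mem hl)
      · have hxv : x v = l₀.2 + 1 := hx.2 v _ (Function.update_self ..)
        obtain ⟨l, hl, hxl⟩ := hcover x ⟨hx.1, hsplit ▸ Or.inr hx.2⟩
        rcases mem_insert.mp hl with rfl | hl
        · exact absurd (hxv.symm.trans hxl) (zmod_two_add_one_ne _)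
        · exact ⟨l, hl, hxl⟩
    have hcard₁₂ : (freeVars ρ₁).card = (freeVars ρ₂).card := by omega
    rw [hcard₁₂] at H₁
    rw [hsplit, Set.inter_union_distrib_left]
    refine (H₁.union hc (by positivity) (mul_nonneg (by positivity) (geomWeight_nonneg hlam.le _))
      H₂).mono (le_of_eq ?_) (zero_le_one.trans hc)
    rw [card_insert_of_notMem hl₀, geomWeight_succ, ← hcard₂, pow_succ]
    field_simp

lemma clauseSat_of_not_injOn {C : Finset (Fin n × ZMod 2)}
    (hC : ¬ Set.InjOn Prod.fst (C : Set (Fin n × ZMod 2))) (x : Fin n → ZMod 2) :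
    ClauseSat C x := by
  simp only [Set.InjOn, not_forall] at hC
  obtain ⟨a, ha, b, hb, hab, hne⟩ := hC
  rcases zmod_two_eq_or_eq_of_ne a.2 b.2 (fun h => hne (Prod.ext hab h)) (x a.1) with h | h
  · exact ⟨a, ha, h⟩
  · exact ⟨b, hb, hab ▸ h⟩

theorem projectionBound_sat_inter_extensions {k : ℕ} {lam : ℝ} (hlam : 0 < lam) (hlam₂ : lam ≤ 2)
    (hk : geomWeight lam k ≤ 1) {φ : List (Finset (Fin n × ZMod 2))} (hφ : IsKCnf k φ)
    (ρ : Fin n → Option (ZMod 2)) :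
    ProjectionBound (2 / lam) (lam ^ (freeVars ρ).card) (SatAssignments φ ∩ extensions ρ) := by
  have hc : 1 ≤ 2 / lam := by rw [le_div_iff₀ hlam]; linarith
  induction hu : (freeVars ρ).card using Nat.strong_induction_on generalizing ρ with
  | _ u IH =>
  by_cases hsat : ∀ C ∈ φ,
      (∃ l ∈ C, ρ l.1 = some l.2) ∨ ¬ Set.InjOn Prod.fst (C : Set (Fin n × ZMod 2))
  · have hext : extensions ρ ⊆ SatAssignments φ := fun x hx C hC => by
      rcases hsat C hC with ⟨l, hl, hρl⟩ | hC
      · exact ⟨l, hl, hx _ _ hρl⟩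
      · exact clauseSat_of_not_injOn hC x
    rw [Set.inter_eq_right.mpr hext, ← hu]
    exact projectionBound_extensions hlam ρ
  push Not at hsat
  obtain ⟨C, hCφ, hunsat, hinj⟩ := hsat
  set F := C.filter fun l => ρ l.1 = none
  have hcover : ∀ x ∈ SatAssignments φ ∩ extensions ρ, ∃ l ∈ F, x l.1 = l.2 := by
    rintro x ⟨hxφ, hxρ⟩
    obtain ⟨l, hl, hxl⟩ := hxφ C hCφ
    refine ⟨l, mem_filter.mpr ⟨hl, ?_⟩, hxl⟩
    cases hρl : ρ l.1 with
    | none => rfl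
    | some b => exact absurd (by rw [hρl, ← hxρ _ _ hρl, hxl]) (hunsat l hl)
  have hF : geomWeight lam F.card ≤ 1 :=
    (geomWeight_mono hlam.le ((card_filter_le _ _).trans (hφ C hCφ))).trans hk
  have := projectionBound_of_cover hc hlam F ρ (fun l hl => (mem_filter.mp hl).2)
    (hinj.mono (coe_subset.mpr (filter_subset _ _))) hcover (fun ρ' h => IH _ (hu ▸ h) ρ' rfl)
  rw [hu] at this
  exact this.mono (mul_le_of_le_one_right (by positivity) hF) (zero_le_one.trans hc)

theorem projectionBound_sat {k : ℕ} {lam : ℝ} (hlam : 0 < lam) (hlam₂ : lam ≤ 2)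
    (hk : geomWeight lam k ≤ 1) {φ : List (Finset (Fin n × ZMod 2))} (hφ : IsKCnf k φ) :
    ProjectionBound (2 / lam) (lam ^ n) (SatAssignments φ) := by
  simpa [extensions, freeVars] using
    projectionBound_sat_inter_extensions hlam hlam₂ hk hφ (fun _ => none)

lemma le_four_mul_of_rpow_le {n m : ℕ}
    (h : (7 : ℝ) ^ ((n : ℝ) / 3) ≤ (15 / 8) ^ n * (16 / 15) ^ m) : n ≤ 4 * m := by
  by_contra! hlt
  have hpow : (2401 : ℝ) ^ n ≤ ((15 / 8) ^ 12 * (16 / 15) ^ 3) ^ n :=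
    calc (2401 : ℝ) ^ n = ((7 : ℝ) ^ ((n : ℝ) / 3)) ^ 12 := by
          rw [← Real.rpow_natCast _ 12, ← Real.rpow_mul (by norm_num),
            show (n : ℝ) / 3 * (12 : ℕ) = ((4 * n : ℕ) : ℝ) by push_cast; ring,
            Real.rpow_natCast, pow_mul]
          norm_num
      _ ≤ ((15 / 8) ^ n * (16 / 15) ^ m) ^ 12 := by gcongr
      _ = (15 / 8) ^ (12 * n) * (16 / 15) ^ (3 * (4 * m)) := by ring
      _ ≤ (15 / 8) ^ (12 * n) * (16 / 15) ^ (3 * n) := by gcongr; norm_num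
      _ = ((15 / 8) ^ 12 * (16 / 15) ^ 3) ^ n := by
        rw [mul_pow, ← pow_mul, ← pow_mul]
  have hlt' : ((15 / 8 : ℝ) ^ 12 * (16 / 15) ^ 3) ^ n < 2401 ^ n :=
    pow_lt_pow_left₀ (by norm_num) (by positivity) (by omega)
  linarith

end CnfProjection

open CnfProjection in
theorem stmt_13 :
    ∃ δ : ℝ, 0 < δ ∧
      ∀ (n : ℕ) (φ : List (Finset (Fin n × ZMod 2))), IsKCnf 3 φ →
        (7 : ℝ) ^ ((n : ℝ) / 3) ≤ ((SatAssignments φ).ncard : ℝ) →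
        ∃ (m : ℕ) (P : Set (Fin n → ZMod 2)),
          IsProjection m P ∧ P ⊆ SatAssignments φ ∧ δ * n ≤ (m : ℝ) := by
  refine ⟨1 / 4, by norm_num, fun n φ hφ hcount => ?_⟩
  have hne : (SatAssignments φ).Nonempty := Set.nonempty_of_ncard_ne_zero fun h => by
    rw [h, Nat.cast_zero] at hcount
    exact (Real.rpow_pos_of_pos (by norm_num) _).not_ge hcount
  have hweight : geomWeight (15 / 8) 3 ≤ 1 := by norm_num [geomWeight, Finset.sum_range_succ]
  obtain ⟨m, P, hP, hPφ, hcard⟩ := projectionBound_sat (by norm_num) (by norm_num) hweight hφ hne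
  have hnm : n ≤ 4 * m := le_four_mul_of_rpow_le (hcount.trans (by norm_num at hcard; exact hcard))
  refine ⟨m, P, hP, hPφ, ?_⟩
  have : (n : ℝ) ≤ 4 * m := by exact_mod_cast hnm
  linarith
end
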